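/- arXiv:1306.5742 — 7 statements merged into one kernel-verified Lean document; each statement's English description precedes it below -/
import Mathlib

section
/- For every natural number n, every n-times continuously differentiable complex-valued function u on an interval J that never vanishes on J, and all n-times continuously differentiable complex-valued functions f, g on J, one has Φ_{n,u}(f,g) = Σ_{r=0}^{n} C(n,r) · Φ_{n-r,u}(1,1) · D^r(fg), where Φ_{n,u}(f,g) = Σ_{p=0}^{n} C(n,p) · D^p(u^p f) · D^{n-p}(u^{-p} g). -/
/-!
Expanding both factors of every term of `Φ_{n,u}(f,g)` by Leibniz and regrouping by the total
order `r` of the derivatives falling on `f` and `g` gives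
`Φ_{n,u}(f,g) = Σ_r C(n,r) Σ_a C(r,a) D^a f D^{r-a} g Φ_{n-r,u}(u^a, u^{-a})`.
Applied to the pair `(u^a, u^{-a})`, whose product is `1`, this identity shows by strong induction
on `n` that `Φ_{m,u}(u^a, u^{-a}) = Φ_{m,u}(1,1)`; the inner sum then collapses to `D^r(fg)`.
-/

open scoped Nat BigOperators

/-- The bilinear map `Φ_{n,u}(f,g) = Σ_{p=0}^{n} C(n,p) D^p(u^p f) D^{n-p}(u^{-p} g)`,
with derivatives taken within the interval `J`. -/
noncomputable def Phi (J : Set ℝ) (n : ℕ) (u f g : ℝ → ℂ) : ℝ → ℂ :=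
  fun t => ∑ p ∈ Finset.range (n + 1), (n.choose p : ℂ) *
    iteratedDerivWithin p (u ^ p * f) J t *
    iteratedDerivWithin (n - p) (u⁻¹ ^ p * g) J t

open Finset

theorem Nat.choose_mul_choose_mul_choose_comm {n : ℕ} (a b c d : ℕ) (h : a + b + c + d = n) :
    n.choose (a + b) * (a + b).choose a * (c + d).choose c =
      n.choose (b + d) * (b + d).choose b * (a + c).choose a := by
  rw [← Nat.cast_inj (R := ℚ)]
  push_cast
  rw [show n = (a + b) + (c + d) by omega, Nat.cast_add_choose, Nat.cast_add_choose,
    Nat.cast_add_choose, show a + b + (c + d) = (b + d) + (a + c) by ring, Nat.cast_add_choose,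
    Nat.cast_add_choose, Nat.cast_add_choose]
  field_simp

/-- Both sides sum `F x₁ x₂ x₃ x₄` over `x₁ + x₂ + x₃ + x₄ = n`, grouped by `x₁ + x₂` on the left
and by `x₂ + x₄` on the right. -/
theorem Finset.sum_compositions_regroup {M : Type*} [AddCommMonoid M] (n : ℕ)
    (F : ℕ → ℕ → ℕ → ℕ → M) :
    ∑ p ∈ range (n + 1), ∑ i ∈ range (p + 1), ∑ j ∈ range (n - p + 1), F i (p - i) j (n - p - j) =
      ∑ r ∈ range (n + 1), ∑ a ∈ range (r + 1), ∑ q ∈ range (n - r + 1),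
        F q a (n - r - q) (r - a) := by
  simp only [← sum_product']
  rw [sum_sigma', sum_sigma']
  refine sum_nbij' (fun x => ⟨n - x.2.1 - x.2.2, (x.1 - x.2.1, x.2.1)⟩)
    (fun x => ⟨x.2.2 + x.2.1, (x.2.2, n - x.1 - x.2.2)⟩) ?_ ?_ ?_ ?_ ?_ <;>
  rintro ⟨p, i, j⟩ hx <;>
  simp only [mem_sigma, mem_product, mem_range, Sigma.mk.injEq, heq_iff_eq,
    Prod.mk.injEq, and_true, true_and] at hx ⊢
  all_goals first | omega | congr 1 <;> omega

section

variable {J : Set ℝ} {u : ℝ → ℂ} {t : ℝ}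

theorem Phi_eq_sum_Phi_pow_inv_pow (hJ : UniqueDiffOn ℝ J) (ht : t ∈ J) {n : ℕ} {f g : ℝ → ℂ}
    (hu : ContDiffOn ℝ n u J) (hu0 : ∀ s ∈ J, u s ≠ 0) (hf : ContDiffOn ℝ n f J)
    (hg : ContDiffOn ℝ n g J) :
    Phi J n u f g t = ∑ r ∈ range (n + 1), (n.choose r : ℂ) * ∑ a ∈ range (r + 1),
      (r.choose a : ℂ) * iteratedDerivWithin a f J t * iteratedDerivWithin (r - a) g J t *
        Phi J (n - r) u (u ^ a) (u⁻¹ ^ a) t := by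
  have hle {k : ℕ} (hk : k ≤ n) : (k : WithTop ℕ∞) ≤ n := by exact_mod_cast hk
  have hup (p : ℕ) : ContDiffOn ℝ n (u ^ p) J := hu.pow p
  have hup' (p : ℕ) : ContDiffOn ℝ n (u⁻¹ ^ p) J := (hu.inv hu0).pow p
  let F : ℕ → ℕ → ℕ → ℕ → ℂ := fun x₁ x₂ x₃ x₄ =>
    (n.choose (x₁ + x₂) * (x₁ + x₂).choose x₁ * (x₃ + x₄).choose x₃ : ℕ) *
      (iteratedDerivWithin x₁ (u ^ (x₁ + x₂)) J t * iteratedDerivWithin x₂ f J t *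
        (iteratedDerivWithin x₃ (u⁻¹ ^ (x₁ + x₂)) J t * iteratedDerivWithin x₄ g J t))
  calc Phi J n u f g t
      = ∑ p ∈ range (n + 1), ∑ i ∈ range (p + 1), ∑ j ∈ range (n - p + 1),
          F i (p - i) j (n - p - j) := by
        refine sum_congr rfl fun p hp => ?_
        have hpn : p ≤ n := mem_range_succ_iff.mp hp
        rw [iteratedDerivWithin_mul ht hJ ((hup p).of_le (hle hpn) t ht)
            (hf.of_le (hle hpn) t ht),
          iteratedDerivWithin_mul ht hJ ((hup' p).of_le (hle (n.sub_le p)) t ht)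
            (hg.of_le (hle (n.sub_le p)) t ht),
          mul_assoc, sum_mul_sum, mul_sum]
        refine sum_congr rfl fun i hi => ?_
        rw [mul_sum]
        refine sum_congr rfl fun j hj => ?_
        simp only [F, Nat.add_sub_cancel' (mem_range_succ_iff.mp hi),
          Nat.add_sub_cancel' (mem_range_succ_iff.mp hj)]
        push_cast
        ring
    _ = ∑ r ∈ range (n + 1), ∑ a ∈ range (r + 1), ∑ q ∈ range (n - r + 1),
          F q a (n - r - q) (r - a) := sum_compositions_regroup n F
    _ = _ := by
        refine sum_congr rfl fun r hr => ?_
        rw [mul_sum]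
        refine sum_congr rfl fun a ha => ?_
        have hrn : r ≤ n := mem_range_succ_iff.mp hr
        have har : a ≤ r := mem_range_succ_iff.mp ha
        rw [Phi, mul_sum, mul_sum]
        refine sum_congr rfl fun q hq => ?_
        have hq : q ≤ n - r := mem_range_succ_iff.mp hq
        simp only [F]
        rw [Nat.choose_mul_choose_mul_choose_comm q a (n - r - q) (r - a) (by omega),
          Nat.add_sub_cancel' har, Nat.add_sub_cancel' hq, ← pow_add, ← pow_add]
        push_cast
        ring

theorem Phi_eq_sum_of_Phi_pow_inv_pow_eq (hJ : UniqueDiffOn ℝ J) (ht : t ∈ J) {n : ℕ}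
    {f g : ℝ → ℂ} (hu : ContDiffOn ℝ n u J) (hu0 : ∀ s ∈ J, u s ≠ 0) (hf : ContDiffOn ℝ n f J)
    (hg : ContDiffOn ℝ n g J)
    (h : ∀ r ≤ n, ∀ a ≤ r, Phi J (n - r) u (u ^ a) (u⁻¹ ^ a) t = Phi J (n - r) u 1 1 t) :
    Phi J n u f g t = ∑ r ∈ range (n + 1), (n.choose r : ℂ) * Phi J (n - r) u 1 1 t *
      iteratedDerivWithin r (f * g) J t := by
  rw [Phi_eq_sum_Phi_pow_inv_pow hJ ht hu hu0 hf hg]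
  refine sum_congr rfl fun r hr => ?_
  have hrn : r ≤ n := mem_range_succ_iff.mp hr
  have hle : (r : WithTop ℕ∞) ≤ n := by exact_mod_cast hrn
  rw [iteratedDerivWithin_mul ht hJ (hf.of_le hle t ht) (hg.of_le hle t ht)]
  simp only [mul_sum]
  refine sum_congr rfl fun a ha => ?_
  rw [h r hrn a (mem_range_succ_iff.mp ha)]
  ring

theorem Phi_pow_inv_pow (hJ : UniqueDiffOn ℝ J) (ht : t ∈ J) (hu0 : ∀ s ∈ J, u s ≠ 0) {m : ℕ}
    (hu : ContDiffOn ℝ m u J) (a : ℕ) :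
    Phi J m u (u ^ a) (u⁻¹ ^ a) t = Phi J m u 1 1 t := by
  induction m using Nat.strong_induction_on generalizing a with
  | _ m IH =>
  have hone : Set.EqOn (u ^ a * u⁻¹ ^ a) (fun _ => 1) J := fun s hs => by
    simp [mul_inv_cancel₀ (pow_ne_zero a (hu0 s hs))]
  have hua : ContDiffOn ℝ m (u ^ a) J := hu.pow a
  have hua' : ContDiffOn ℝ m (u⁻¹ ^ a) J := (hu.inv hu0).pow a
  rw [Phi_eq_sum_of_Phi_pow_inv_pow_eq hJ ht hu hu0 hua hua']
  · simp only [iteratedDerivWithin_congr hone ht, iteratedDerivWithin_const]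
    simp
  · intro r hr b hb
    rcases r.eq_zero_or_pos with rfl | hr0
    · obtain rfl : b = 0 := by omega
      simp
    · exact IH (m - r) (by omega) (hu.of_le (by exact_mod_cast m.sub_le r)) b

end

theorem stmt0_general (J : Set ℝ) (hJuniq : UniqueDiffOn ℝ J)
    (n : ℕ) (u f g : ℝ → ℂ)
    (hu : ContDiffOn ℝ n u J) (hf : ContDiffOn ℝ n f J) (hg : ContDiffOn ℝ n g J)
    (hu0 : ∀ t ∈ J, u t ≠ 0) :
    ∀ t ∈ J, Phi J n u f g t =
      ∑ r ∈ Finset.range (n + 1), (n.choose r : ℂ) * Phi J (n - r) u 1 1 t *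
        iteratedDerivWithin r (f * g) J t := fun t ht =>
  Phi_eq_sum_of_Phi_pow_inv_pow_eq hJuniq ht hu hu0 hf hg fun r _ a _ =>
    Phi_pow_inv_pow hJuniq ht hu0 (hu.of_le (by exact_mod_cast n.sub_le r)) a

theorem stmt0 (J : Set ℝ) (hJconn : J.OrdConnected) (hJuniq : UniqueDiffOn ℝ J)
    (n : ℕ) (u f g : ℝ → ℂ)
    (hu : ContDiffOn ℝ n u J) (hf : ContDiffOn ℝ n f J) (hg : ContDiffOn ℝ n g J)
    (hu0 : ∀ t ∈ J, u t ≠ 0) :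
    ∀ t ∈ J, Phi J n u f g t =
      ∑ r ∈ Finset.range (n + 1), (n.choose r : ℂ) * Phi J (n - r) u 1 1 t *
        iteratedDerivWithin r (f * g) J t :=
  stmt0_general J hJuniq n u f g hu hf hg hu0
end

section
/- For every natural number n, every natural number q, and every nowhere-vanishing C^n complex-valued function u on an interval J, one has Σ_{p=0}^{n} C(n,p) · D^p(u^{p+q}) · D^{n-p}(u^{-p-q}) = Σ_{p=0}^{n} C(n,p) · D^p(u^p) · D^{n-p}(u^{-p}), i.e. Φ_{n,u}(u^q, u^{-q}) = Φ_{n,u}(1,1). -/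
/-!
Writing `A` for the Taylor series of `u` at `t` and `B = A⁻¹`, the Leibniz rule turns both sides
into `n!` times `∑ₚ [Xᵖ] Aᵖ⁺ᵠ · [Xⁿ⁻ᵖ] Bᵖ⁺ᵠ` (resp. with `q = 0`), so it suffices to prove
this identity of formal power series. In two variables it reads `S(Aᵠ(x) Bᵠ(y)) = S(1)`,
where `S(H) = ∑ₚ [xᵖ yⁿ⁻ᵖ] Wᵖ H` and `W = A(x) B(y)`. Now `S` vanishes on every multiple
`(x - y) K`: as `[xᵖ yⁿ⁻ᵖ] (x - y) M = [xᵖ⁻¹ yⁿ⁻ᵖ] M - [xᵖ yⁿ⁻ᵖ⁻¹] M`, the sum telescopes to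
the sum of order `n - 1` applied to `(W - 1) K`, and `W - 1` is again a multiple of `x - y`
because `W = 1` on the diagonal. Finally `Aᵠ(x) Bᵠ(y) - 1` vanishes on the diagonal too.
-/

open PowerSeries Finset

namespace PowerSeries

variable {R : Type*} [CommRing R]

/-! In `R⟦X⟧⟦X⟧` the outer variable `X` plays `x` and `C X` plays `y`, so that `map C F` is
`F(x)` and `C F` is `F(y)`. -/

theorem X_sub_C_X_dvd_map_C_sub_C (F : R⟦X⟧) :
    (X - C X : R⟦X⟧⟦X⟧) ∣ map C F - C F := by
  refine ⟨mk fun i => mk fun j => coeff (i + j + 1) F, ?_⟩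
  ext i j
  rcases i with _ | i <;> rcases j with _ | j <;>
    simp [sub_mul, coeff_C_mul, coeff_succ_X_mul, coeff_map, coeff_C, coeff_zero_X_mul,
      -coeff_zero_eq_constantCoeff, add_assoc, add_left_comm]

noncomputable def diagSum (W : R⟦X⟧⟦X⟧) (n : ℕ) (H : R⟦X⟧⟦X⟧) : R :=
  ∑ p ∈ range (n + 1), coeff (n - p) (coeff p (W ^ p * H))

theorem diagSum_sub (W : R⟦X⟧⟦X⟧) (n : ℕ) (H₁ H₂ : R⟦X⟧⟦X⟧) :
    diagSum W n (H₁ - H₂) = diagSum W n H₁ - diagSum W n H₂ := by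
  simp only [diagSum, mul_sub, map_sub, sum_sub_distrib]

theorem diagSum_succ_X_sub_C_X_mul (W K : R⟦X⟧⟦X⟧) (n : ℕ) :
    diagSum W (n + 1) ((X - C X) * K) = diagSum W n ((W - 1) * K) := by
  have hX : ∑ p ∈ range (n + 2), coeff (n + 1 - p) (coeff p (W ^ p * (X * K))) =
      ∑ p ∈ range (n + 1), coeff (n - p) (coeff p (W ^ p * (W * K))) := by
    rw [sum_range_succ']
    simp [mul_left_comm _ X, coeff_succ_X_mul, pow_succ, mul_assoc]
  have hY : ∑ p ∈ range (n + 2), coeff (n + 1 - p) (coeff p (W ^ p * (C X * K))) =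
      ∑ p ∈ range (n + 1), coeff (n - p) (coeff p (W ^ p * K)) := by
    rw [sum_range_succ]
    refine (add_eq_left.2 (by simp [mul_left_comm _ (C X), coeff_C_mul])).trans
      (sum_congr rfl fun p hp => ?_)
    rw [mul_left_comm, coeff_C_mul, show n + 1 - p = n - p + 1 by grind, coeff_succ_X_mul]
  simp only [diagSum, sub_mul, mul_sub, map_sub, sum_sub_distrib, hX, hY, one_mul]

theorem diagSum_eq_zero {W H : R⟦X⟧⟦X⟧} (hW : (X - C X) ∣ W - 1) (hH : (X - C X) ∣ H)
    (n : ℕ) : diagSum W n H = 0 := by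
  obtain ⟨D, hD⟩ := hW
  induction n generalizing H with
  | zero =>
    obtain ⟨K, rfl⟩ := hH
    simp [diagSum]
  | succ n ih =>
    obtain ⟨K, rfl⟩ := hH
    rw [diagSum_succ_X_sub_C_X_mul, hD, mul_assoc]
    exact ih (dvd_mul_right _ _)

theorem diagSum_congr {W H₁ H₂ : R⟦X⟧⟦X⟧} (hW : (X - C X) ∣ W - 1)
    (hH : (X - C X) ∣ H₁ - H₂) (n : ℕ) : diagSum W n H₁ = diagSum W n H₂ :=
  sub_eq_zero.1 (diagSum_sub W n H₁ H₂ ▸ diagSum_eq_zero hW hH n)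

theorem diagSum_map_C_mul_C (A B F G : R⟦X⟧) (n : ℕ) :
    diagSum (map C A * C B) n (map C F * C G) =
      ∑ p ∈ range (n + 1), coeff p (A ^ p * F) * coeff (n - p) (B ^ p * G) := by
  refine sum_congr rfl fun p _ => ?_
  rw [show (map C A * C B) ^ p * (map C F * C G) = map C (A ^ p * F) * C (B ^ p * G) by
    simp only [map_mul, map_pow]; ring, coeff_mul_C, coeff_map, coeff_C_mul]

theorem sum_coeff_pow_mul_coeff_pow_mul {A B : R⟦X⟧} (hAB : A * B = 1) (F G : R⟦X⟧) (n : ℕ) :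
    ∑ p ∈ range (n + 1), coeff p (A ^ p * F) * coeff (n - p) (B ^ p * G) =
      ∑ p ∈ range (n + 1), coeff p (A ^ p * (F * G)) * coeff (n - p) (B ^ p * 1) := by
  rw [← diagSum_map_C_mul_C, ← diagSum_map_C_mul_C]
  refine diagSum_congr ?_ ?_ n
  · have h : map C A * C B - 1 = (map C A - C A) * C B := by
      rw [sub_mul, ← map_mul, hAB, map_one]
    exact h ▸ dvd_mul_of_dvd_left (X_sub_C_X_dvd_map_C_sub_C A) _
  · have h : map C F * C G - map C (F * G) * C 1 = -map C F * (map C G - C G) := by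
      rw [map_one, map_mul]; ring
    exact h ▸ dvd_mul_of_dvd_right (X_sub_C_X_dvd_map_C_sub_C G) _

theorem sum_coeff_pow_add_mul_coeff_pow_add {A B : R⟦X⟧} (hAB : A * B = 1) (n q : ℕ) :
    ∑ p ∈ range (n + 1), coeff p (A ^ (p + q)) * coeff (n - p) (B ^ (p + q)) =
      ∑ p ∈ range (n + 1), coeff p (A ^ p) * coeff (n - p) (B ^ p) := by
  simp only [pow_add]
  rw [sum_coeff_pow_mul_coeff_pow_mul hAB, ← mul_pow, hAB, one_pow]
  simp only [mul_one]

end PowerSeries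

section JetWithin

variable {𝕜 : Type*} [NontriviallyNormedField 𝕜] {𝕜' : Type*} [NormedField 𝕜']
  [NormedAlgebra 𝕜 𝕜'] {s : Set 𝕜} {x : 𝕜} {f g : 𝕜 → 𝕜'} {n : ℕ}

noncomputable def jetWithin (s : Set 𝕜) (x : 𝕜) (f : 𝕜 → 𝕜') : 𝕜'⟦X⟧ :=
  mk fun k => iteratedDerivWithin k f s x / k.factorial

theorem coeff_jetWithin (k : ℕ) :
    coeff k (jetWithin s x f) = iteratedDerivWithin k f s x / k.factorial :=
  coeff_mk _ _

theorem constantCoeff_jetWithin : constantCoeff (jetWithin s x f) = f x := by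
  simp [← coeff_zero_eq_constantCoeff_apply, coeff_jetWithin]

theorem jetWithin_congr (h : f =ᶠ[nhdsWithin x s] g) (hfg : f x = g x) :
    jetWithin s x f = jetWithin s x g := by
  ext k
  rw [coeff_jetWithin, coeff_jetWithin, h.iteratedDerivWithin_eq hfg]

theorem jetWithin_one : jetWithin s x (1 : 𝕜 → 𝕜') = 1 := by
  ext k
  rw [coeff_jetWithin, coeff_one, Pi.one_def, iteratedDerivWithin_const]
  split_ifs <;> simp_all

variable [CharZero 𝕜']

theorem iteratedDerivWithin_eq_factorial_mul_coeff_jetWithin (k : ℕ) :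
    iteratedDerivWithin k f s x = k.factorial * coeff k (jetWithin s x f) := by
  rw [coeff_jetWithin, mul_div_cancel₀ _ (by exact_mod_cast k.factorial_ne_zero)]

theorem trunc_jetWithin_mul (hx : x ∈ s) (hs : UniqueDiffOn 𝕜 s)
    (hf : ContDiffWithinAt 𝕜 n f s x) (hg : ContDiffWithinAt 𝕜 n g s x) :
    trunc (n + 1) (jetWithin s x (f * g)) = trunc (n + 1) (jetWithin s x f * jetWithin s x g) := by
  ext k
  simp only [coeff_trunc]
  split_ifs with hk
  · have hkn : (k : WithTop ℕ∞) ≤ n := by exact_mod_cast Nat.lt_succ_iff.1 hk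
    rw [coeff_mul, Nat.sum_antidiagonal_eq_sum_range_succ_mk, coeff_jetWithin,
      iteratedDerivWithin_mul hx hs (hf.of_le hkn) (hg.of_le hkn), sum_div]
    refine sum_congr rfl fun i hi => ?_
    have hik : i ≤ k := Nat.lt_succ_iff.1 (mem_range.1 hi)
    have hchoose : (k.choose i : 𝕜') ≠ 0 := by exact_mod_cast (Nat.choose_pos hik).ne'
    rw [coeff_jetWithin, coeff_jetWithin, ← Nat.choose_mul_factorial_mul_factorial hik]
    push_cast
    field_simp
  · rfl

theorem trunc_jetWithin_pow (hx : x ∈ s) (hs : UniqueDiffOn 𝕜 s)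
    (hf : ContDiffWithinAt 𝕜 n f s x) (m : ℕ) :
    trunc (n + 1) (jetWithin s x (f ^ m)) = trunc (n + 1) (jetWithin s x f ^ m) := by
  induction m with
  | zero => rw [pow_zero, pow_zero, jetWithin_one]
  | succ m ih =>
    rw [pow_succ, trunc_jetWithin_mul (f := f ^ m) hx hs (hf.pow m) hf, ← trunc_trunc_mul, ih,
      trunc_trunc_mul, pow_succ]

theorem trunc_jetWithin_inv (hx : x ∈ s) (hs : UniqueDiffOn 𝕜 s)
    (hf : ContDiffWithinAt 𝕜 n f s x) (hf0 : f x ≠ 0) :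
    trunc (n + 1) (jetWithin s x f⁻¹) = trunc (n + 1) (jetWithin s x f)⁻¹ := by
  have hinv : trunc (n + 1) (jetWithin s x f * jetWithin s x f⁻¹) = 1 := by
    rw [← trunc_jetWithin_mul hx hs hf (hf.inv hf0), ← trunc_one n,
      ← jetWithin_one (s := s) (x := x)]
    congr 1
    refine jetWithin_congr ?_ (mul_inv_cancel₀ hf0)
    filter_upwards [hf.continuousWithinAt.eventually_ne hf0] with y hy using mul_inv_cancel₀ hy
  have hunit : jetWithin s x f⁻¹ =
      (jetWithin s x f)⁻¹ * (jetWithin s x f * jetWithin s x f⁻¹) := by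
    rw [← mul_assoc, PowerSeries.inv_mul_cancel _ (by rwa [constantCoeff_jetWithin]), one_mul]
  rw [hunit, ← trunc_mul_trunc, hinv]
  simp

theorem iteratedDerivWithin_pow_eq_factorial_mul_coeff (hx : x ∈ s) (hs : UniqueDiffOn 𝕜 s)
    (hf : ContDiffWithinAt 𝕜 n f s x) {k : ℕ} (hk : k ≤ n) (m : ℕ) :
    iteratedDerivWithin k (f ^ m) s x = k.factorial * coeff k (jetWithin s x f ^ m) := by
  rw [iteratedDerivWithin_eq_factorial_mul_coeff_jetWithin,
    ← coeff_coe_trunc_of_lt (Nat.lt_succ_of_le hk), trunc_jetWithin_pow hx hs hf,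
    coeff_coe_trunc_of_lt (Nat.lt_succ_of_le hk)]

theorem iteratedDerivWithin_inv_pow_eq_factorial_mul_coeff (hx : x ∈ s) (hs : UniqueDiffOn 𝕜 s)
    (hf : ContDiffWithinAt 𝕜 n f s x) (hf0 : f x ≠ 0) {k : ℕ} (hk : k ≤ n) (m : ℕ) :
    iteratedDerivWithin k (f⁻¹ ^ m) s x = k.factorial * coeff k ((jetWithin s x f)⁻¹ ^ m) := by
  rw [iteratedDerivWithin_pow_eq_factorial_mul_coeff hx hs (hf.inv hf0) hk,
    ← coeff_coe_trunc_of_lt (Nat.lt_succ_of_le hk), ← trunc_trunc_pow,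
    trunc_jetWithin_inv hx hs hf hf0, trunc_trunc_pow, coeff_coe_trunc_of_lt (Nat.lt_succ_of_le hk)]

end JetWithin

theorem stmt1_general (J : Set ℝ) (hJuniq : UniqueDiffOn ℝ J)
    (n q : ℕ) (u : ℝ → ℂ) (hu : ContDiffOn ℝ n u J) (hu0 : ∀ t ∈ J, u t ≠ 0) :
    ∀ t ∈ J,
      (∑ p ∈ Finset.range (n + 1), (n.choose p : ℂ) *
        iteratedDerivWithin p (u ^ (p + q)) J t *
        iteratedDerivWithin (n - p) (u⁻¹ ^ (p + q)) J t) =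
      ∑ p ∈ Finset.range (n + 1), (n.choose p : ℂ) *
        iteratedDerivWithin p (u ^ p) J t *
        iteratedDerivWithin (n - p) (u⁻¹ ^ p) J t := by
  intro t ht
  have hterm (m : ℕ) {p : ℕ} (hp : p ∈ range (n + 1)) :
      (n.choose p : ℂ) * iteratedDerivWithin p (u ^ m) J t *
        iteratedDerivWithin (n - p) (u⁻¹ ^ m) J t =
      n.factorial * (coeff p (jetWithin J t u ^ m) * coeff (n - p) ((jetWithin J t u)⁻¹ ^ m)) := by
    have hpn := Nat.lt_succ_iff.1 (mem_range.1 hp)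
    rw [iteratedDerivWithin_pow_eq_factorial_mul_coeff ht hJuniq (hu t ht) hpn,
      iteratedDerivWithin_inv_pow_eq_factorial_mul_coeff ht hJuniq (hu t ht) (hu0 t ht)
        (Nat.sub_le n p),
      ← Nat.choose_mul_factorial_mul_factorial hpn]
    push_cast
    ring
  rw [sum_congr rfl fun p hp => hterm (p + q) hp, sum_congr rfl fun p hp => hterm p hp,
    ← mul_sum, ← mul_sum, sum_coeff_pow_add_mul_coeff_pow_add
      (PowerSeries.mul_inv_cancel _ (by rw [constantCoeff_jetWithin]; exact hu0 t ht))]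

theorem stmt1 (J : Set ℝ) (hJconn : J.OrdConnected) (hJuniq : UniqueDiffOn ℝ J)
    (n q : ℕ) (u : ℝ → ℂ) (hu : ContDiffOn ℝ n u J) (hu0 : ∀ t ∈ J, u t ≠ 0) :
    ∀ t ∈ J,
      (∑ p ∈ Finset.range (n + 1), (n.choose p : ℂ) *
        iteratedDerivWithin p (u ^ (p + q)) J t *
        iteratedDerivWithin (n - p) (u⁻¹ ^ (p + q)) J t) =
      ∑ p ∈ Finset.range (n + 1), (n.choose p : ℂ) *
        iteratedDerivWithin p (u ^ p) J t *
        iteratedDerivWithin (n - p) (u⁻¹ ^ p) J t :=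
  stmt1_general J hJuniq n q u hu hu0
end

section
/- (Extended second Frobenius–Stickelberger formula.) For every integer λ ≥ 1, every natural number n, and every triple (u, v, w) of C^n complex-valued functions on an interval J with u nowhere vanishing, one has Σ_{p=0}^{n} C(n,p) · ((-1)^p/(p+λ)) · u^{-p-λ} · D^{n-p}(v · D^p(u^{p+λ} w)) = Σ_{p=0}^{n} C(n,p) · ((-1)^p/(p+λ)) · D^{n-p}(v · D^p w). -/
open Finset

/-!
Expanding `D^(n-p) (v * D^p g)` by Leibniz and exchanging the two sums reduces both sides to
`∑ j, C(n,j) v^(j)(t) S_(n-j)`, so it suffices to compare, for each `m` and `c = u t`, the sums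
`∑ p, C(m,p) (-1)^p/(p+λ) c^(-p-λ) D^m (u^(p+λ) w) (t)` and `∑ p, C(m,p) (-1)^p/(p+λ) D^m w (t)`.
Writing `u = c + δ` with `δ t = 0`, the binomial theorem gives
`c^(-N) D^m (u^N w) (t) = ∑ k ≤ m, C(N,k) c^(-k) D^m (δ^k w) (t)`, the terms with `k > m` vanishing
because `δ^k` has a zero of order `k` at `t`. For `1 ≤ k ≤ m` the coefficient
`∑ p, C(m,p) (-1)^p C(p+λ,k)/(p+λ) = ∑ p, (-1)^p C(m,p) C(p+λ-1,k-1)/k` is an `m`-th forward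
difference of a polynomial of degree `k - 1 < m`, hence zero, so only `k = 0` survives.
-/

theorem Nat.choose_mul_choose_sub_comm (n p j : ℕ) :
    n.choose p * (n - p).choose j = n.choose j * (n - j).choose p := by
  have hp := Nat.choose_mul (n := n) (Nat.le_add_right p j)
  have hj := Nat.choose_mul (n := n) (Nat.le_add_left j p)
  rw [Nat.add_sub_cancel_left] at hp
  rw [Nat.add_sub_cancel] at hj
  rw [← hp, ← hj, Nat.choose_symm_add]

theorem alternating_sum_range_choose_mul_choose_add {m j : ℕ} (hjm : j < m) (μ : ℕ) :
    ∑ p ∈ range (m + 1), (-1 : ℤ) ^ p * m.choose p * (p + μ).choose j = 0 := by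
  -- up to the sign `(-1) ^ m`, the sum is this `m`-th forward difference
  have hΔ : (fwdDiff 1)^[m] (fun x : ℕ ↦ ((x + μ).choose j : ℤ)) 0 = 0 := by
    obtain ⟨k, rfl⟩ : ∃ k, m = k + 1 + j := ⟨m - j - 1, by omega⟩
    have hj : (fwdDiff 1)^[j] (fun x : ℕ ↦ (x.choose j : ℤ)) = fun _ ↦ 1 := by
      simpa using fwdDiff_iter_choose 0 j
    rw [fwdDiff_iter_comp_add (h := 1) (fun x : ℕ ↦ (x.choose j : ℤ)), Function.iterate_add_apply,
      hj, Function.iterate_succ_apply, fwdDiff_const,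
      Function.iterate_fixed (fwdDiff_const (h := 1) (0 : ℤ))]
  rw [fwdDiff_iter_eq_sum_shift] at hΔ
  rw [← mul_eq_zero_of_right ((-1 : ℤ) ^ m) hΔ, mul_sum]
  refine sum_congr rfl fun p hp ↦ ?_
  have hpm : m + (m - p) = p + 2 * (m - p) := by have := mem_range.1 hp; omega
  simp only [zero_add, smul_eq_mul, mul_one]
  rw [← mul_assoc, ← mul_assoc, ← pow_add, hpm, pow_add, pow_mul]
  simp

theorem sum_choose_mul_neg_one_pow_div_mul_choose_eq_zero {K : Type*} [Field K] [CharZero K]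
    {m l k : ℕ} (hl : 1 ≤ l) (hk : 1 ≤ k) (hkm : k ≤ m) :
    ∑ p ∈ range (m + 1), (m.choose p : K) * ((-1) ^ p / ((p : K) + l)) * (p + l).choose k = 0 := by
  obtain ⟨k, rfl⟩ : ∃ k', k = k' + 1 := ⟨k - 1, by omega⟩
  obtain ⟨l, rfl⟩ : ∃ l', l = l' + 1 := ⟨l - 1, by omega⟩
  have hterm : ∀ p : ℕ, (m.choose p : K) * ((-1) ^ p / ((p : K) + (l + 1 : ℕ))) *
      (p + (l + 1)).choose (k + 1) =
        (((-1) ^ p * m.choose p * (p + l).choose k : ℤ) : K) / (k + 1) := by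
    intro p
    have h : ((p + l + 1 : ℕ) : K) * (p + l).choose k = (p + l + 1).choose (k + 1) * (k + 1) := by
      exact_mod_cast Nat.add_one_mul_choose_eq (p + l) k
    have hN : ((p + l + 1 : ℕ) : K) ≠ 0 := Nat.cast_ne_zero.2 (Nat.succ_ne_zero _)
    have hk : ((k + 1 : ℕ) : K) ≠ 0 := Nat.cast_ne_zero.2 (Nat.succ_ne_zero _)
    rw [← add_assoc]
    push_cast at h hN hk ⊢
    rw [← add_assoc]
    field_simp
    linear_combination -(m.choose p : K) * h
  simp_rw [hterm, ← sum_div, ← Int.cast_sum,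
    alternating_sum_range_choose_mul_choose_add (m := m) (j := k) (by omega) l]
  simp

section IteratedDerivWithin

variable {𝕜 : Type*} [NontriviallyNormedField 𝕜] {s : Set 𝕜} {x : 𝕜}
  {F : Type*} [NormedAddCommGroup F] [NormedSpace 𝕜 F]

theorem iteratedDerivWithin_iteratedDerivWithin (a b : ℕ) (f : 𝕜 → F) :
    iteratedDerivWithin a (iteratedDerivWithin b f s) s = iteratedDerivWithin (a + b) f s := by
  ext x
  rw [iteratedDerivWithin_eq_iterate, iteratedDerivWithin_eq_iterate,
    show iteratedDerivWithin b f s = (fun g ↦ derivWithin g s)^[b] f from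
      funext fun _ ↦ iteratedDerivWithin_eq_iterate, ← Function.iterate_add_apply]

theorem ContDiffOn.iteratedDerivWithin {f : 𝕜 → F} {n m p : ℕ} (hf : ContDiffOn 𝕜 n f s)
    (hs : UniqueDiffOn 𝕜 s) (hmpn : m + p ≤ n) :
    ContDiffOn 𝕜 m (iteratedDerivWithin p f s) s := by
  induction p generalizing m with
  | zero => exact hf.of_le (by exact_mod_cast hmpn)
  | succ p ih =>
    rw [iteratedDerivWithin_succ]
    exact (ih (m := m + 1) (by omega)).derivWithin hs (by simp)

theorem sum_choose_mul_iteratedDerivWithin_mul_iteratedDerivWithin {𝔸 : Type*}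
    [NormedCommRing 𝔸] [NormedAlgebra 𝕜 𝔸] {n : ℕ} {v : 𝕜 → 𝔸} {g : ℕ → 𝕜 → 𝔸} (α : ℕ → 𝔸)
    (hx : x ∈ s) (hs : UniqueDiffOn 𝕜 s) (hv : ContDiffOn 𝕜 n v s)
    (hg : ∀ p, ContDiffOn 𝕜 n (g p) s) :
    ∑ p ∈ range (n + 1), n.choose p * α p *
        iteratedDerivWithin (n - p) (v * iteratedDerivWithin p (g p) s) s x =
      ∑ j ∈ range (n + 1), n.choose j * iteratedDerivWithin j v s x *
        ∑ p ∈ range (n - j + 1),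
          (n - j).choose p * α p * iteratedDerivWithin (n - j) (g p) s x := by
  have hleibniz : ∀ p ∈ range (n + 1),
      iteratedDerivWithin (n - p) (v * iteratedDerivWithin p (g p) s) s x =
        ∑ j ∈ range (n - p + 1), (n - p).choose j * iteratedDerivWithin j v s x *
          iteratedDerivWithin (n - j) (g p) s x := fun p hp ↦ by
    have hpn := Nat.le_of_lt_succ (mem_range.1 hp)
    rw [iteratedDerivWithin_mul hx hs ((hv.of_le (by exact_mod_cast n.sub_le p)) x hx)
      (((hg p).iteratedDerivWithin hs (Nat.sub_add_cancel hpn).le) x hx)]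
    refine sum_congr rfl fun j hj ↦ ?_
    rw [iteratedDerivWithin_iteratedDerivWithin,
      show n - p - j + p = n - j by have := mem_range.1 hj; omega]
  calc _ = ∑ p ∈ range (n + 1), ∑ j ∈ range (n - p + 1), n.choose p * α p *
          ((n - p).choose j * iteratedDerivWithin j v s x *
            iteratedDerivWithin (n - j) (g p) s x) :=
        sum_congr rfl fun p hp ↦ by rw [hleibniz p hp, mul_sum]
    _ = ∑ j ∈ range (n + 1), ∑ p ∈ range (n - j + 1), n.choose p * α p *
          ((n - p).choose j * iteratedDerivWithin j v s x *
            iteratedDerivWithin (n - j) (g p) s x) :=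
        sum_comm' fun p j ↦ by simp only [mem_range]; omega
    _ = _ := by
      simp_rw [mul_sum]
      refine sum_congr rfl fun j _ ↦ sum_congr rfl fun p _ ↦ ?_
      have hswap : (n.choose p : 𝔸) * (n - p).choose j = n.choose j * (n - j).choose p := by
        rw [← Nat.cast_mul, ← Nat.cast_mul, Nat.choose_mul_choose_sub_comm]
      linear_combination α p * iteratedDerivWithin j v s x *
        iteratedDerivWithin (n - j) (g p) s x * hswap

variable {𝔸 : Type*} [NormedRing 𝔸] [NormedAlgebra 𝕜 𝔸]

theorem iteratedDerivWithin_pow_mul_eq_zero {f g : 𝕜 → 𝔸} {m k : ℕ} (hx : x ∈ s)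
    (hs : UniqueDiffOn 𝕜 s) (hf : ContDiffWithinAt 𝕜 m f s x) (hg : ContDiffWithinAt 𝕜 m g s x)
    (hfx : f x = 0) (hmk : m < k) :
    iteratedDerivWithin m (f ^ k * g) s x = 0 := by
  induction k generalizing m with
  | zero => omega
  | succ k ih =>
    have hfg : ContDiffWithinAt 𝕜 m (f ^ k * g) s x := (hf.pow k).mul hg
    rw [pow_succ', mul_assoc, iteratedDerivWithin_mul hx hs hf hfg]
    refine sum_eq_zero fun i hi ↦ ?_
    rcases i with _ | i
    · simp [hfx]
    · have hle : ((m - (i + 1) : ℕ) : WithTop ℕ∞) ≤ m := by exact_mod_cast Nat.sub_le m (i + 1)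
      have := mem_range.1 hi
      rw [ih (hf.of_le hle) (hg.of_le hle) (by omega), mul_zero]

variable {𝕜' : Type*} [NormedField 𝕜'] [NormedAlgebra 𝕜 𝕜']

theorem inv_pow_mul_iteratedDerivWithin_pow_mul {u w : 𝕜 → 𝕜'} {m : ℕ} (hx : x ∈ s)
    (hs : UniqueDiffOn 𝕜 s) (hu : ContDiffWithinAt 𝕜 m u s x) (hw : ContDiffWithinAt 𝕜 m w s x)
    (hux : u x ≠ 0) (N : ℕ) :
    (u x)⁻¹ ^ N * iteratedDerivWithin m (u ^ N * w) s x =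
      ∑ k ∈ range (m + 1), N.choose k * (u x)⁻¹ ^ k *
        iteratedDerivWithin m ((u - fun _ ↦ u x) ^ k * w) s x := by
  set δ : 𝕜 → 𝕜' := u - fun _ ↦ u x
  have hδ : ContDiffWithinAt 𝕜 m δ s x := hu.sub contDiffWithinAt_const
  have hexpand : u ^ N * w =
      fun t ↦ ∑ k ∈ range (N + 1), (N.choose k * u x ^ (N - k)) * (δ ^ k * w) t := by
    ext t
    rw [Pi.mul_apply, Pi.pow_apply, show u t = δ t + u x by simp [δ], add_pow, sum_mul]
    refine sum_congr rfl fun k _ ↦ ?_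
    simp only [Pi.mul_apply, Pi.pow_apply]
    ring
  rw [hexpand, iteratedDerivWithin_fun_sum
    (f := fun k t ↦ (N.choose k * u x ^ (N - k)) * (δ ^ k * w) t) hx hs fun k _ ↦
      contDiffWithinAt_const.mul ((hδ.pow k).mul hw)]
  simp only [iteratedDerivWithin_const_mul_field]
  set F : ℕ → 𝕜' := fun k ↦ N.choose k * (u x)⁻¹ ^ k * iteratedDerivWithin m (δ ^ k * w) s x
  have hF_of_gt_N : ∀ k ≥ N + 1, F k = 0 := fun k hk ↦ by
    simp [F, Nat.choose_eq_zero_of_lt (Nat.lt_of_succ_le hk)]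
  have hF_of_gt_m : ∀ k ≥ m + 1, F k = 0 := fun k hk ↦ by
    simp [F, iteratedDerivWithin_pow_mul_eq_zero hx hs hδ hw (by simp [δ]) hk]
  rw [← eventually_constant_sum hF_of_gt_m (Nat.le_add_left _ (N + 1)),
    eventually_constant_sum hF_of_gt_N (Nat.le_add_right _ (m + 1)), mul_sum]
  refine sum_congr rfl fun k hk ↦ ?_
  rw [pow_sub₀ _ hux (Nat.le_of_lt_succ (mem_range.1 hk))]
  simp only [F, inv_pow]
  field_simp

theorem sum_choose_mul_inv_pow_mul_iteratedDerivWithin_pow_mul [CharZero 𝕜'] {u w : 𝕜 → 𝕜'}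
    {m l : ℕ} (hl : 1 ≤ l) (hx : x ∈ s) (hs : UniqueDiffOn 𝕜 s) (hu : ContDiffWithinAt 𝕜 m u s x)
    (hw : ContDiffWithinAt 𝕜 m w s x) (hux : u x ≠ 0) :
    ∑ p ∈ range (m + 1), (m.choose p : 𝕜') * ((-1) ^ p / ((p : 𝕜') + l)) * (u x)⁻¹ ^ (p + l) *
        iteratedDerivWithin m (u ^ (p + l) * w) s x =
      ∑ p ∈ range (m + 1), (m.choose p : 𝕜') * ((-1) ^ p / ((p : 𝕜') + l)) *
        iteratedDerivWithin m w s x := by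
  simp_rw [mul_assoc _ ((u x)⁻¹ ^ _), inv_pow_mul_iteratedDerivWithin_pow_mul hx hs hu hw hux,
    mul_sum]
  rw [sum_comm, sum_range_succ', sum_eq_zero, zero_add]
  · simp
  · intro k hk
    simp_rw [← mul_assoc, ← sum_mul, sum_choose_mul_neg_one_pow_div_mul_choose_eq_zero hl
      (Nat.le_add_left 1 k) (mem_range.1 hk), zero_mul]

end IteratedDerivWithin

theorem stmt3_general (J : Set ℝ) (hJuniq : UniqueDiffOn ℝ J)
    (n : ℕ) (l : ℕ) (hl : 1 ≤ l) (u v w : ℝ → ℂ)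
    (hu : ContDiffOn ℝ n u J) (hv : ContDiffOn ℝ n v J) (hw : ContDiffOn ℝ n w J)
    (hu0 : ∀ t ∈ J, u t ≠ 0) :
    ∀ t ∈ J,
      (∑ p ∈ Finset.range (n + 1), (n.choose p : ℂ) * ((-1 : ℂ) ^ p / ((p : ℂ) + l)) *
        (u⁻¹ ^ (p + l)) t *
        iteratedDerivWithin (n - p) (v * iteratedDerivWithin p (u ^ (p + l) * w) J) J t) =
      ∑ p ∈ Finset.range (n + 1), (n.choose p : ℂ) * ((-1 : ℂ) ^ p / ((p : ℂ) + l)) *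
        iteratedDerivWithin (n - p) (v * iteratedDerivWithin p w J) J t := by
  intro t ht
  have hlhs := sum_choose_mul_iteratedDerivWithin_mul_iteratedDerivWithin
    (fun p ↦ (-1 : ℂ) ^ p / ((p : ℂ) + l) * (u⁻¹ ^ (p + l)) t) ht hJuniq hv
    (g := fun p ↦ u ^ (p + l) * w) fun p ↦ (hu.pow _).mul hw
  have hrhs := sum_choose_mul_iteratedDerivWithin_mul_iteratedDerivWithin
    (fun p ↦ (-1 : ℂ) ^ p / ((p : ℂ) + l)) ht hJuniq hv (g := fun _ ↦ w) fun _ ↦ hw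
  simp only [← mul_assoc] at hlhs
  rw [hlhs, hrhs]
  refine sum_congr rfl fun j _ ↦ ?_
  have hle : ((n - j : ℕ) : WithTop ℕ∞) ≤ n := by exact_mod_cast n.sub_le j
  simp only [Pi.pow_apply, Pi.inv_apply]
  rw [sum_choose_mul_inv_pow_mul_iteratedDerivWithin_pow_mul hl ht hJuniq ((hu.of_le hle) t ht)
    ((hw.of_le hle) t ht) (hu0 t ht)]

theorem stmt3 (J : Set ℝ) (hJconn : J.OrdConnected) (hJuniq : UniqueDiffOn ℝ J)
    (n : ℕ) (l : ℕ) (hl : 1 ≤ l) (u v w : ℝ → ℂ)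
    (hu : ContDiffOn ℝ n u J) (hv : ContDiffOn ℝ n v J) (hw : ContDiffOn ℝ n w J)
    (hu0 : ∀ t ∈ J, u t ≠ 0) :
    ∀ t ∈ J,
      (∑ p ∈ Finset.range (n + 1), (n.choose p : ℂ) * ((-1 : ℂ) ^ p / ((p : ℂ) + l)) *
        (u⁻¹ ^ (p + l)) t *
        iteratedDerivWithin (n - p) (v * iteratedDerivWithin p (u ^ (p + l) * w) J) J t) =
      ∑ p ∈ Finset.range (n + 1), (n.choose p : ℂ) * ((-1 : ℂ) ^ p / ((p : ℂ) + l)) *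
        iteratedDerivWithin (n - p) (v * iteratedDerivWithin p w J) J t :=
  stmt3_general J hJuniq n l hl u v w hu hv hw hu0
end

section
/- For all complex numbers x, y, z, every natural number n, and every complex number λ not in {0, -1, ..., -n}, one has Σ_{p=0}^{n} C(n,p) · (1/(p+λ)) · (z + (p+λ)x)^p · (y - (p+λ)x)^{n-p} = Σ_{p=0}^{n} C(n,p) · (1/(p+λ)) · z^p · y^{n-p}. -/
/-!
Write `F_n(λ; x, y, z)` for the left-hand side, so that the right-hand side is
`F_n(λ; 0, y, z)`. Termwise differentiation gives `∂_y F_{n+1}(λ) = (n+1) F_n(λ)` and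
`∂_z F_{n+1}(λ) = (n+1) F_n(λ+1)`, so by induction on `n` the difference
`F_{n+1}(λ; x, y, z) - F_{n+1}(λ; 0, y, z)` depends on neither `y` nor `z`. At `y = z = 0` the
factor `1/(p+λ)` cancels and `F_{n+1}(λ; x, 0, 0) = x^{n+1} ∑_p (-1)^{n+1-p} C(n+1,p) (λ+p)^n`,
an `(n+1)`-st forward difference of a polynomial of degree `n`, hence zero.
-/

open Finset

theorem sum_range_choose_mul_add_pow_eq_zero {R : Type*} [CommRing R] {j n : ℕ} (h : j < n)
    (a : R) : ∑ k ∈ range (n + 1), (-1 : R) ^ (n - k) * n.choose k * (a + k) ^ j = 0 := by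
  have := congr_fun (fwdDiff_iter_pow_eq_zero_of_lt (R := R) h) a
  rw [fwdDiff_iter_eq_sum_shift] at this
  simpa [zsmul_eq_mul] using this

noncomputable def abelSum (n : ℕ) (lam x y z : ℂ) : ℂ :=
  ∑ p ∈ range (n + 1), (n.choose p : ℂ) * (1 / ((p : ℂ) + lam)) *
    (z + ((p : ℂ) + lam) * x) ^ p * (y - ((p : ℂ) + lam) * x) ^ (n - p)

theorem hasDerivAt_abelSum_y (n : ℕ) (lam x y z : ℂ) :
    HasDerivAt (fun y => abelSum (n + 1) lam x y z) ((n + 1) * abelSum n lam x y z) y := by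
  unfold abelSum
  refine (HasDerivAt.fun_sum fun p (_ : p ∈ range (n + 2)) =>
    (((hasDerivAt_id' y).sub_const (((p : ℂ) + lam) * x)).pow (n + 1 - p)).const_mul
      (((n + 1).choose p : ℂ) * (1 / ((p : ℂ) + lam)) * (z + ((p : ℂ) + lam) * x) ^ p))
    |>.congr_deriv ?_
  simp only [sum_range_succ _ (n + 1), Nat.sub_self, Nat.cast_zero, zero_mul, mul_zero, add_zero,
    mul_sum]
  refine sum_congr rfl fun p hmem => ?_
  have hp : p ≤ n := Nat.lt_succ_iff.mp (mem_range.mp hmem)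
  have hchoose : ((n + 1).choose p : ℂ) * ((n + 1 - p : ℕ) : ℂ) = (n + 1) * n.choose p := by
    exact_mod_cast (Nat.choose_mul_succ_eq n p).symm.trans (mul_comm _ _)
  rw [show n + 1 - p - 1 = n - p by omega]
  linear_combination (1 / ((p : ℂ) + lam) * (z + ((p : ℂ) + lam) * x) ^ p *
    (y - ((p : ℂ) + lam) * x) ^ (n - p)) * hchoose

theorem hasDerivAt_abelSum_z (n : ℕ) (lam x y z : ℂ) :
    HasDerivAt (fun z => abelSum (n + 1) lam x y z) ((n + 1) * abelSum n (lam + 1) x y z) z := by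
  unfold abelSum
  refine (HasDerivAt.fun_sum fun p (_ : p ∈ range (n + 2)) =>
    ((((hasDerivAt_id' z).add_const (((p : ℂ) + lam) * x)).pow p).const_mul
      (((n + 1).choose p : ℂ) * (1 / ((p : ℂ) + lam)))).mul_const
      ((y - ((p : ℂ) + lam) * x) ^ (n + 1 - p))).congr_deriv ?_
  simp only [sum_range_succ' _ (n + 1), Nat.cast_zero, zero_mul, mul_zero, add_zero, mul_sum]
  refine sum_congr rfl fun q _ => ?_
  have hchoose : ((n + 1).choose (q + 1) : ℂ) * (q + 1) = (n + 1) * n.choose q := by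
    exact_mod_cast (Nat.add_one_mul_choose_eq n q).symm
  simp only [Nat.add_sub_add_right, Nat.add_sub_cancel, Nat.cast_add, Nat.cast_one,
    show ∀ w : ℂ, (q : ℂ) + 1 + w = q + (w + 1) from fun w => by ring]
  linear_combination (1 / ((q : ℂ) + (lam + 1)) * (z + ((q : ℂ) + (lam + 1)) * x) ^ q *
    (y - ((q : ℂ) + (lam + 1)) * x) ^ (n - q)) * hchoose

theorem abelSum_succ_zero_zero (n : ℕ) (lam x : ℂ)
    (hlam : ∀ p : ℕ, p ≤ n + 1 → lam ≠ -(p : ℂ)) : abelSum (n + 1) lam x 0 0 = 0 := by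
  have hterm : ∀ p ∈ range (n + 2), ((n + 1).choose p : ℂ) * (1 / ((p : ℂ) + lam)) *
      (0 + ((p : ℂ) + lam) * x) ^ p * (0 - ((p : ℂ) + lam) * x) ^ (n + 1 - p) =
      x ^ (n + 1) * ((-1) ^ (n + 1 - p) * ((n + 1).choose p) * (lam + p) ^ n) := by
    intro p hmem
    have hp : p ≤ n + 1 := Nat.lt_succ_iff.mp (mem_range.mp hmem)
    have hne : (p : ℂ) + lam ≠ 0 := fun h => hlam p hp (by linear_combination h)
    have hpow (w : ℂ) : w ^ p * w ^ (n + 1 - p) = w ^ (n + 1) := by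
      rw [← pow_add, Nat.add_sub_cancel' hp]
    rw [zero_add, zero_sub, neg_mul_eq_neg_mul, mul_pow, mul_pow, neg_pow, ← hpow x,
      add_comm lam]
    field_simp
    linear_combination ((n + 1).choose p : ℂ) * x ^ p * x ^ (n + 1 - p) * hpow ((p : ℂ) + lam)
  rw [abelSum, sum_congr rfl hterm, ← mul_sum,
    sum_range_choose_mul_add_pow_eq_zero (Nat.lt_succ_self n), mul_zero]

theorem abelSum_eq_abelSum_zero (n : ℕ) (lam x y z : ℂ)
    (hlam : ∀ p : ℕ, p ≤ n → lam ≠ -(p : ℂ)) : abelSum n lam x y z = abelSum n lam 0 y z := by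
  induction n generalizing lam y z with
  | zero => simp [abelSum]
  | succ n ih =>
    have hlam_succ : ∀ p : ℕ, p ≤ n → lam + 1 ≠ -(p : ℂ) := fun p hp h =>
      hlam (p + 1) (by omega) (by push_cast; linear_combination h)
    have hconst {f : ℂ → ℂ} (hf : ∀ t, HasDerivAt f 0 t) (a b : ℂ) : f a = f b :=
      is_const_of_deriv_eq_zero (fun t => (hf t).differentiableAt) (fun t => (hf t).deriv) a b
    have hy : abelSum (n + 1) lam x y z - abelSum (n + 1) lam 0 y z =
        abelSum (n + 1) lam x 0 z - abelSum (n + 1) lam 0 0 z := by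
      refine hconst (f := fun y => abelSum (n + 1) lam x y z - abelSum (n + 1) lam 0 y z)
        (fun t => ?_) y 0
      refine ((hasDerivAt_abelSum_y n lam x t z).fun_sub
        (hasDerivAt_abelSum_y n lam 0 t z)).congr_deriv ?_
      rw [ih lam t z fun p hp => hlam p (by omega), sub_self]
    have hz : abelSum (n + 1) lam x 0 z - abelSum (n + 1) lam 0 0 z =
        abelSum (n + 1) lam x 0 0 - abelSum (n + 1) lam 0 0 0 := by
      refine hconst (f := fun z => abelSum (n + 1) lam x 0 z - abelSum (n + 1) lam 0 0 z)
        (fun t => ?_) z 0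
      refine ((hasDerivAt_abelSum_z n lam x 0 t).fun_sub
        (hasDerivAt_abelSum_z n lam 0 0 t)).congr_deriv ?_
      rw [ih (lam + 1) 0 t hlam_succ, sub_self]
    rw [abelSum_succ_zero_zero n lam x hlam, abelSum_succ_zero_zero n lam 0 hlam] at hz
    linear_combination hy + hz

theorem stmt5 (n : ℕ) (x y z lam : ℂ) (hlam : ∀ p : ℕ, p ≤ n → lam ≠ -(p : ℂ)) :
    (∑ p ∈ Finset.range (n + 1), (n.choose p : ℂ) * (1 / ((p : ℂ) + lam)) *
      (z + ((p : ℂ) + lam) * x) ^ p * (y - ((p : ℂ) + lam) * x) ^ (n - p)) =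
    ∑ p ∈ Finset.range (n + 1), (n.choose p : ℂ) * (1 / ((p : ℂ) + lam)) *
      z ^ p * y ^ (n - p) := by
  simpa [abelSum] using abelSum_eq_abelSum_zero n lam x y z hlam
end

section
/- Let f be an entire function of exponential type with |D^n f(0)| ≤ C·K^n for all n, and let A = {x ∈ ℂ : e·K·|x|·exp(K|x|) ≤ 1}. Then for every x ∈ A and every integer m ≥ 1: (1/m!)·D^m f(0) = Σ_{p=m}^{∞} C(p-1, m-1) · ((-1)^{p-m} p^{p-m} / p!) · x^{p-m} · D^p f(px). -/
/-!
Expand each `D^p f(p x)` in its Taylor series at `0`. The resulting double series over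
`(j, q)` (with `p = m + j`) converges absolutely: the growth bound on the derivatives reduces
this to `∑ j C(p-1, m-1) p^j / p! · (r e^r)^j < ∞` with `r = K|x|`, and since `r e^r ≤ e⁻¹`
Stirling's formula bounds the `j`-th term by a multiple of `j^(-3/2)`. Summing the double series
along the diagonals `j + q = n` instead, the coefficient of `x^n D^(m+n) f(0)` is
`(1 / ((m-1)! n!)) ∑ j (-1)^j C(n, j) (m + j)^(n-1)`, an `n`-th finite difference of a polynomial
of degree `n - 1`, hence zero for `n ≥ 1`; only `D^m f(0) / m!` survives.
-/

open Finset Real Filter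
open scoped Nat

theorem sum_range_neg_one_pow_mul_choose_mul_pow_eq_zero {R : Type*} [CommRing R] {j n : ℕ}
    (h : j < n) (y : R) :
    ∑ k ∈ range (n + 1), (-1) ^ k * n.choose k * (y + k) ^ j = 0 := by
  have hΔ := congr_fun (fwdDiff_iter_pow_eq_zero_of_lt (R := R) h) y
  rw [fwdDiff_iter_eq_sum_shift, Pi.zero_apply] at hΔ
  calc ∑ k ∈ range (n + 1), (-1) ^ k * n.choose k * (y + k) ^ j
      = (-1) ^ n * ∑ k ∈ range (n + 1), ((-1 : ℤ) ^ (n - k) * n.choose k) • (y + k • 1) ^ j := by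
        rw [mul_sum]
        refine sum_congr rfl fun k hk ↦ ?_
        have hkn : n + (n - k) = k + 2 * (n - k) := by grind
        rw [zsmul_eq_mul, nsmul_one]
        push_cast
        rw [← mul_assoc, ← mul_assoc, ← pow_add, hkn, pow_add, pow_mul, neg_one_sq, one_pow,
          mul_one]
    _ = 0 := by rw [hΔ, mul_zero]

theorem Nat.add_sub_one_choose_mul_factorial_mul_factorial_mul {m : ℕ} (hm : 1 ≤ m) (j : ℕ) :
    (m + j - 1).choose (m - 1) * (m - 1)! * j ! * (m + j) = (m + j)! := by
  obtain ⟨k, rfl⟩ := Nat.exists_eq_add_of_le' hm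
  have := Nat.add_choose_mul_factorial_mul_factorial j k
  rw [add_comm j k] at this
  rw [show k + 1 + j - 1 = k + j by omega, Nat.add_sub_cancel,
    show k + 1 + j = k + j + 1 by ring, Nat.factorial_succ, ← this]
  ring

theorem sum_antidiagonal_neg_one_pow_mul_choose_mul_pow_div {𝕜 : Type*} [Field 𝕜] [CharZero 𝕜]
    {m : ℕ} (hm : 1 ≤ m) (n : ℕ) :
    ∑ p ∈ antidiagonal n, (-1 : 𝕜) ^ p.1 * ((m + p.1 - 1).choose (m - 1) : ℕ) *
        ((m + p.1 : ℕ) : 𝕜) ^ n / (((m + p.1)! : ℕ) * (p.2 ! : ℕ)) =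
      if n = 0 then 1 / ((m ! : ℕ) : 𝕜) else 0 := by
  rcases n with _ | n
  · simp
  have hterm : ∀ p ∈ antidiagonal (n + 1),
      (-1 : 𝕜) ^ p.1 * ((m + p.1 - 1).choose (m - 1) : ℕ) *
        ((m + p.1 : ℕ) : 𝕜) ^ (n + 1) / (((m + p.1)! : ℕ) * (p.2 ! : ℕ)) =
      ((m - 1)! * (n + 1)! : 𝕜)⁻¹ * ((-1) ^ p.1 * (n + 1).choose p.1 * ((m : 𝕜) + p.1) ^ n) := by
    rintro ⟨j, q⟩ hjq
    rw [HasAntidiagonal.mem_antidiagonal] at hjq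
    dsimp only at hjq ⊢
    have hfac := Nat.add_choose_mul_factorial_mul_factorial q j
    rw [add_comm q j, hjq] at hfac
    rw [← hfac, ← Nat.add_sub_one_choose_mul_factorial_mul_factorial_mul hm j]
    have : ((m + j - 1).choose (m - 1) : 𝕜) ≠ 0 := by
      exact_mod_cast (Nat.choose_pos (by omega)).ne'
    have : ((n + 1).choose j : 𝕜) ≠ 0 := by exact_mod_cast (Nat.choose_pos (by omega)).ne'
    have : (m : 𝕜) + j ≠ 0 := by exact_mod_cast (show m + j ≠ 0 by omega)
    push_cast
    field_simp
    ring
  rw [sum_congr rfl hterm, ← mul_sum, Nat.sum_antidiagonal_eq_sum_range_succ_mk,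
    sum_range_neg_one_pow_mul_choose_mul_pow_eq_zero (lt_add_one n), mul_zero]
  rfl

theorem pow_div_factorial_le_exp_div_sqrt {n : ℕ} (hn : n ≠ 0) :
    (n : ℝ) ^ n / n ! ≤ exp n / √n := by
  have hn' : (0 : ℝ) < n := by positivity
  have hsqrt : √(n : ℝ) ≤ √(2 * π * n) := Real.sqrt_le_sqrt (by nlinarith [Real.pi_gt_three])
  have hpow : (n / exp 1 : ℝ) ^ n = n ^ n / exp n := by
    rw [div_pow, ← Real.exp_nat_mul, mul_one]
  rw [div_le_div_iff₀ (by positivity) (by positivity)]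
  calc (n : ℝ) ^ n * √n = exp n * (√n * (n / exp 1) ^ n) := by
        rw [hpow]; field_simp
    _ ≤ exp n * n ! := by
        gcongr
        exact (mul_le_mul_of_nonneg_right hsqrt (by positivity)).trans
          (Stirling.le_factorial_stirling n)

theorem add_pow_le_exp_mul_pow {x : ℝ} (hx : 0 ≤ x) (n : ℕ) :
    (x + n) ^ n ≤ exp x * n ^ n := by
  rcases Nat.eq_zero_or_pos n with rfl | hn
  · simpa using Real.one_le_exp hx
  have hn' : (0 : ℝ) < n := by exact_mod_cast hn
  have h := one_sub_div_pow_le_exp_neg (n := n) (t := -x) (by linarith)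
  rw [neg_neg, sub_eq_add_neg, ← neg_div, neg_neg] at h
  calc (x + n) ^ n = (1 + x / n) ^ n * n ^ n := by
        rw [← mul_pow]; congr 1; field_simp; ring
    _ ≤ exp x * n ^ n := by gcongr

theorem Real.rpow_neg_three_halves {x : ℝ} (hx : 0 < x) : x ^ (-(3 / 2) : ℝ) = (√x * x)⁻¹ := by
  rw [Real.rpow_neg hx.le, show (3 / 2 : ℝ) = 1 / 2 + 1 by norm_num, Real.rpow_add hx,
    Real.rpow_one, ← Real.sqrt_eq_rpow]

theorem summable_choose_mul_pow_div_factorial_mul_pow {m : ℕ} (hm : 1 ≤ m) {t : ℝ} (ht₀ : 0 ≤ t)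
    (ht : t ≤ exp (-1)) :
    Summable fun j : ℕ ↦ ((m + j - 1).choose (m - 1) : ℕ) * ((m + j : ℕ) : ℝ) ^ j /
      ((m + j)! : ℕ) * t ^ j := by
  refine Summable.of_norm_bounded_eventually_nat
    (g := fun j : ℕ ↦ exp m * (j : ℝ) ^ (-(3 / 2) : ℝ))
    ((Real.summable_nat_rpow.2 (by norm_num)).mul_left _) ?_
  filter_upwards [eventually_ne_atTop 0] with j hj
  have hj' : (0 : ℝ) < j := by positivity
  have hfac : (1 : ℝ) ≤ (m - 1)! := by exact_mod_cast (m - 1).factorial_pos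
  have hchoose : (0 : ℝ) < ((m + j - 1).choose (m - 1) : ℕ) := by
    exact_mod_cast Nat.choose_pos (by omega)
  rw [Real.norm_of_nonneg (by positivity),
    ← Nat.add_sub_one_choose_mul_factorial_mul_factorial_mul hm j, Real.rpow_neg_three_halves hj']
  push_cast
  calc ((m + j - 1).choose (m - 1) : ℝ) * ((m : ℝ) + j) ^ j /
        ((m + j - 1).choose (m - 1) * (m - 1)! * j ! * (m + j)) * t ^ j
      = ((m : ℝ) + j) ^ j * t ^ j / ((m - 1)! * j ! * (m + j)) := by
        field_simp
    _ ≤ (exp m * j ^ j) * exp (-1) ^ j / (1 * j ! * j) := by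
        gcongr
        · exact add_pow_le_exp_mul_pow (Nat.cast_nonneg m) j
        · linarith [(Nat.cast_nonneg m : (0 : ℝ) ≤ m)]
    _ = exp m * ((j : ℝ) ^ j / j !) * exp (-j) / j := by
        rw [← Real.exp_nat_mul]; ring_nf
    _ ≤ exp m * (exp j / √j) * exp (-j) / j := by
        gcongr exp m * ?_ * exp (-j) / j
        exact pow_div_factorial_le_exp_div_sqrt hj
    _ = exp m * (√j * j)⁻¹ := by
        rw [Real.exp_neg]; field_simp

theorem Real.hasSum_pow_div_factorial (x : ℝ) : HasSum (fun n : ℕ ↦ x ^ n / n !) (exp x) :=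
  Real.exp_eq_exp_ℝ ▸ NormedSpace.expSeries_div_hasSum_exp x

theorem HasSum.sum_antidiagonal {α A : Type*} [AddCommMonoid α] [TopologicalSpace α]
    [ContinuousAdd α] [RegularSpace α] [AddCommMonoid A] [HasAntidiagonal A] {u : A × A → α}
    {s : α} (h : HasSum u s) : HasSum (fun n ↦ ∑ p ∈ antidiagonal n, u p) s :=
  (HasAntidiagonal.sigmaAntidiagonalEquivProd.hasSum_iff.2 h).sigma fun n ↦ by
    rw [← sum_coe_sort]; exact hasSum_fintype _

/-- With `d k = f^(k)(0)`, `doubleSeriesTerm m x d (j, ·)` is the Taylor series at `0` of the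
`j`-th summand `C(m+j-1, m-1) (-1)^j (m+j)^j / (m+j)! · x^j · f^(m+j)((m+j) x)`. -/
noncomputable def doubleSeriesTerm {𝕜 : Type*} [Field 𝕜] (m : ℕ) (x : 𝕜) (d : ℕ → 𝕜)
    (p : ℕ × ℕ) : 𝕜 :=
  ((m + p.1 - 1).choose (m - 1) : 𝕜) *
    ((-1 : 𝕜) ^ p.1 * ((m + p.1 : ℕ) : 𝕜) ^ p.1 / (((m + p.1)! : ℕ) : 𝕜)) * x ^ p.1 *
    ((p.2 ! : 𝕜)⁻¹ * (((m + p.1 : ℕ) : 𝕜) * x) ^ p.2 * d (m + p.1 + p.2))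

theorem summable_doubleSeriesTerm {𝕜 : Type*} [RCLike 𝕜] {d : ℕ → 𝕜} {C K : ℝ} (hC : 0 ≤ C)
    (hK : 0 ≤ K) (hd : ∀ n, ‖d n‖ ≤ C * K ^ n) {m : ℕ} (hm : 1 ≤ m) {x : 𝕜}
    (hx : K * ‖x‖ * exp (K * ‖x‖) ≤ exp (-1)) :
    Summable (doubleSeriesTerm m x d) := by
  set r := K * ‖x‖ with hr_def
  have hr : 0 ≤ r := by positivity
  set c : ℕ → ℝ := fun j ↦
    ((m + j - 1).choose (m - 1) : ℕ) * ((m + j : ℕ) : ℝ) ^ j / ((m + j)! : ℕ) * r ^ j with hc_def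
  have hc : ∀ j, 0 ≤ c j := fun j ↦ by positivity
  have hrow : ∀ j, HasSum (fun q : ℕ ↦ C * K ^ m * c j * (((m + j : ℕ) * r) ^ q / q !))
      (C * K ^ m * c j * exp ((m + j : ℕ) * r)) :=
    fun j ↦ (Real.hasSum_pow_div_factorial _).mul_left _
  have hcol : Summable fun j ↦ C * K ^ m * c j * exp ((m + j : ℕ) * r) := by
    refine ((summable_choose_mul_pow_div_factorial_mul_pow hm (by positivity) hx).mul_right
      (exp (m * r))).mul_left (C * K ^ m) |>.congr fun j ↦ ?_
    simp only [hc_def, mul_pow, ← Real.exp_nat_mul, mul_assoc, ← Real.exp_add]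
    push_cast
    ring_nf
  refine Summable.of_norm_bounded
    (g := fun p : ℕ × ℕ ↦ C * K ^ m * c p.1 * (((m + p.1 : ℕ) * r) ^ p.2 / p.2 !))
    ((summable_prod_of_nonneg fun p ↦ by have := hc p.1; positivity).2
      ⟨fun j ↦ (hrow j).summable, by simpa only [fun j ↦ (hrow j).tsum_eq] using hcol⟩) ?_
  rintro ⟨j, q⟩
  simp only [doubleSeriesTerm, norm_mul, norm_div, norm_pow, norm_neg, norm_one, norm_inv,
    RCLike.norm_natCast, one_pow, one_mul, ← mul_div_assoc]
  calc _ ≤ ((m + j - 1).choose (m - 1) : ℕ) * ((m + j : ℕ) : ℝ) ^ j / ((m + j)! : ℕ) * ‖x‖ ^ j *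
        ((q ! : ℝ)⁻¹ * (((m + j : ℕ) : ℝ) * ‖x‖) ^ q * (C * K ^ (m + j + q))) := by
        gcongr; exact hd _
    _ = _ := by simp only [hc_def, hr_def, pow_add, mul_pow]; ring

theorem sum_antidiagonal_doubleSeriesTerm {𝕜 : Type*} [Field 𝕜] [CharZero 𝕜] {m : ℕ}
    (hm : 1 ≤ m) (x : 𝕜) (d : ℕ → 𝕜) (n : ℕ) :
    ∑ p ∈ antidiagonal n, doubleSeriesTerm m x d p =
      if n = 0 then 1 / ((m ! : ℕ) : 𝕜) * d m else 0 := by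
  have hterm : ∀ p ∈ antidiagonal n, doubleSeriesTerm m x d p =
      (-1 : 𝕜) ^ p.1 * ((m + p.1 - 1).choose (m - 1) : ℕ) *
        ((m + p.1 : ℕ) : 𝕜) ^ n / (((m + p.1)! : ℕ) * (p.2 ! : ℕ)) * (x ^ n * d (m + n)) := by
    rintro ⟨j, q⟩ hjq
    rw [HasAntidiagonal.mem_antidiagonal] at hjq
    subst hjq
    simp only [doubleSeriesTerm, add_assoc]
    ring
  rw [sum_congr rfl hterm, ← sum_mul, sum_antidiagonal_neg_one_pow_mul_choose_mul_pow_div hm]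
  split_ifs with hn <;> simp [hn]

theorem hasSum_doubleSeriesTerm {𝕜 : Type*} [RCLike 𝕜] {d : ℕ → 𝕜} {C K : ℝ} (hC : 0 ≤ C)
    (hK : 0 ≤ K) (hd : ∀ n, ‖d n‖ ≤ C * K ^ n) {m : ℕ} (hm : 1 ≤ m) {x : 𝕜}
    (hx : K * ‖x‖ * exp (K * ‖x‖) ≤ exp (-1)) :
    HasSum (doubleSeriesTerm m x d) (1 / ((m ! : ℕ) : 𝕜) * d m) := by
  have hsum := (summable_doubleSeriesTerm hC hK hd hm hx).hasSum
  have hdiag := hsum.sum_antidiagonal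
  simp only [sum_antidiagonal_doubleSeriesTerm hm] at hdiag
  exact (hasSum_ite_eq 0 _).unique hdiag ▸ hsum

theorem iteratedDeriv_iteratedDeriv {𝕜 F : Type*} [NontriviallyNormedField 𝕜]
    [NormedAddCommGroup F] [NormedSpace 𝕜 F] (f : 𝕜 → F) (p q : ℕ) :
    iteratedDeriv q (iteratedDeriv p f) = iteratedDeriv (p + q) f := by
  simp only [iteratedDeriv_eq_iterate, ← Function.iterate_add_apply, add_comm q p]

theorem Complex.hasSum_iteratedDeriv_taylorSeries_of_entire {f : ℂ → ℂ} (hf : Differentiable ℂ f)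
    (p : ℕ) (z : ℂ) :
    HasSum (fun q : ℕ ↦ (q ! : ℂ)⁻¹ * z ^ q * iteratedDeriv (p + q) f 0)
      (iteratedDeriv p f z) := by
  have hfp : Differentiable ℂ (iteratedDeriv p f) :=
    (hf.contDiff (n := ⊤)).differentiable_iteratedDeriv p (WithTop.coe_lt_top _)
  simpa only [iteratedDeriv_iteratedDeriv, sub_zero, smul_eq_mul, mul_assoc] using
    Complex.hasSum_taylorSeries_of_entire hfp 0 z

theorem stmt7 (f : ℂ → ℂ) (hf : Differentiable ℂ f) (C K : ℝ) (hC : 0 < C) (hK : 0 < K)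
    (hgrowth : ∀ n : ℕ, ‖iteratedDeriv n f 0‖ ≤ C * K ^ n) :
    ∀ x : ℂ, Real.exp 1 * K * ‖x‖ * Real.exp (K * ‖x‖) ≤ 1 →
      ∀ m : ℕ, 1 ≤ m →
        HasSum (fun j : ℕ =>
          ((m + j - 1).choose (m - 1) : ℂ) *
            ((-1 : ℂ) ^ j * ((m + j : ℕ) : ℂ) ^ j / (((m + j)! : ℕ) : ℂ)) *
            x ^ j * iteratedDeriv (m + j) f (((m + j : ℕ) : ℂ) * x))
          ((1 / ((m ! : ℕ) : ℂ)) * iteratedDeriv m f 0) := by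
  intro x hx m hm
  have hx' : K * ‖x‖ * exp (K * ‖x‖) ≤ exp (-1) := by
    rw [Real.exp_neg, inv_eq_one_div, le_div_iff₀ (exp_pos 1)]
    linarith
  refine (hasSum_doubleSeriesTerm hC.le hK.le hgrowth hm hx').prod_fiberwise fun j ↦ ?_
  exact (Complex.hasSum_iteratedDeriv_taylorSeries_of_entire hf (m + j) ((m + j : ℕ) * x)).mul_left
    (((m + j - 1).choose (m - 1) : ℂ) *
      ((-1 : ℂ) ^ j * ((m + j : ℕ) : ℂ) ^ j / (((m + j)! : ℕ) : ℂ)) * x ^ j)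
end

section
/- (Auxiliary lemma for the Lagrange product formula.) For all natural numbers m, N and every nowhere-vanishing C^∞ complex-valued function ψ on an interval J, one has Φ_{m,ψ}(1, ψ^N · Dψ) = (1/(m+1)) · ( Φ_{m+1,ψ}(1, ψ^{N+1}) − D^{m+1}(ψ^{N+1}) ), where Φ_{n,ψ}(f,g) = Σ_{p=0}^{n} C(n,p) D^p(ψ^p f) D^{n-p}(ψ^{-p} g). -/
open scoped Nat BigOperators
open Finset
set_option linter.unusedSectionVars false

section Abstract
variable {A : Type*} [CommRing A] (d : A → A) (u v : A)

noncomputable def LS (m : ℕ) (f H : A) : A :=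
  ∑ q ∈ range (m+1), (m.choose q : A) * (d^[q] (u^q*f) * d^[m-q] (v^q*H))

noncomputable def WS (m : ℕ) (f H : A) : A :=
  ∑ q ∈ range (m+1), ((q * m.choose q : ℕ) : A) * (d^[q] (u^q*f) * d^[m-q] (v^q*H))

noncomputable def ES (m : ℕ) (f H : A) : A :=
  ∑ k ∈ range m, ((m.descFactorial (k+1) : ℕ) : A) *
    LS d u v (m-(k+1)) 1 ((d u * v)^k * (d f) * H)

section
variable (hadd : ∀ a b, d (a+b) = d a + d b) (hleib : ∀ a b, d (a*b) = d a * b + a * d b)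

include hadd

lemma d_zero : d 0 = 0 := by
  have := hadd 0 0; simpa using this

lemma d_neg (a : A) : d (-a) = - d a := by
  have h := hadd a (-a); rw [add_neg_cancel, d_zero d hadd] at h
  linear_combination -h

lemma d_sub (a b : A) : d (a - b) = d a - d b := by
  rw [sub_eq_add_neg, hadd, d_neg d hadd, sub_eq_add_neg]

lemma d_natmul (n : ℕ) (a : A) : d ((n : A) * a) = (n : A) * d a := by
  induction n with
  | zero => simpa using d_zero d hadd
  | succ k ih =>
      have : ((k+1 : ℕ) : A) * a = (k : A) * a + a := by push_cast; ring
      rw [this, hadd, ih]; push_cast; ring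

lemma iter_add (k : ℕ) (a b : A) : d^[k] (a+b) = d^[k] a + d^[k] b := by
  induction k generalizing a b with
  | zero => simp
  | succ k ih => simp only [Function.iterate_succ_apply, hadd, ih]

lemma iter_sub (k : ℕ) (a b : A) : d^[k] (a-b) = d^[k] a - d^[k] b := by
  induction k generalizing a b with
  | zero => simp
  | succ k ih => simp only [Function.iterate_succ_apply, d_sub d hadd, ih]

lemma iter_natmul (k : ℕ) (n : ℕ) (a : A) : d^[k] ((n : A) * a) = (n : A) * d^[k] a := by
  induction k generalizing a with
  | zero => simp
  | succ k ih => simp only [Function.iterate_succ_apply, d_natmul d hadd, ih]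

lemma iter_zero (k : ℕ) : d^[k] (0 : A) = 0 := by
  induction k with
  | zero => simp
  | succ k ih => simp only [Function.iterate_succ_apply, d_zero d hadd, ih]

include hleib

lemma d_one : d 1 = 0 := by
  have := hleib 1 1; simpa using this

lemma d_pow (w : A) (k : ℕ) : d (w^(k+1)) = ((k+1 : ℕ) : A) * (w^k * d w) := by
  induction k with
  | zero => simp
  | succ k ih =>
      rw [pow_succ, hleib, ih]; push_cast; ring

end

section
variable (hadd : ∀ a b, d (a+b) = d a + d b) (hleib : ∀ a b, d (a*b) = d a * b + a * d b)
  (huv : u * v = 1)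

include hadd hleib huv

lemma d_v : d v = -(v^2 * d u) := by
  have h0 : d (u*v) = 0 := by rw [huv, d_one d hadd hleib]
  rw [hleib] at h0
  have h1 : v * (d u * v + u * d v) = 0 := by rw [h0]; ring
  have h2 : v * u = 1 := by linear_combination huv
  linear_combination v * h0 - d v * h2
lemma d_vpow (q : ℕ) : d (v^q) = -((q : ℕ) : A) * (v^(q+1) * d u) := by
  cases q with
  | zero => simp [d_one d hadd hleib]
  | succ k =>
      rw [d_pow d hadd hleib, d_v d u v hadd hleib huv]; push_cast; ring

end

section
variable (hadd : ∀ a b, d (a+b) = d a + d b)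
include hadd

lemma LS_sub₂ (m : ℕ) (f H₁ H₂ : A) :
    LS d u v m f (H₁ - H₂) = LS d u v m f H₁ - LS d u v m f H₂ := by
  rw [LS, LS, LS, ← Finset.sum_sub_distrib]
  refine Finset.sum_congr rfl fun q _ => ?_
  rw [show v^q * (H₁ - H₂) = v^q*H₁ - v^q*H₂ by ring, iter_sub d hadd]
  ring

lemma LS_zero₁ (m : ℕ) (H : A) : LS d u v m 0 H = 0 := by
  rw [LS]
  refine Finset.sum_eq_zero fun q _ => ?_
  rw [mul_zero, iter_zero d hadd]
  ring

end

section
variable (hadd : ∀ a b, d (a+b) = d a + d b) (hleib : ∀ a b, d (a*b) = d a * b + a * d b)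
  (huv : u * v = 1)
include hadd hleib huv

lemma R3 (m : ℕ) (f H : A) :
    WS d u v (m+1) f H = ((m+1 : ℕ) : A) *
      (WS d u v m (d u * f) (v*H) + LS d u v m (d u * f) (v*H) + LS d u v m (u * d f) (v*H)) := by
  rw [WS, Finset.sum_range_succ']
  have h0 : ((0 * (m+1).choose 0 : ℕ) : A) * (d^[0] (u^0*f) * d^[m+1-0] (v^0*H)) = 0 := by
    simp
  rw [h0, add_zero, WS, LS, LS, ← Finset.sum_add_distrib, ← Finset.sum_add_distrib,
    Finset.mul_sum]
  refine Finset.sum_congr rfl fun i hi => ?_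
  have hsub : m + 1 - (i+1) = m - i := by omega
  have hco : ((i+1) * (m+1).choose (i+1) : ℕ) = (m+1) * m.choose i := by
    rw [Nat.mul_comm]
    exact (Nat.add_one_mul_choose_eq m i).symm
  rw [hsub, Function.iterate_succ_apply]
  have hd1 : d (u^(i+1)*f) = u^i*(u*d f) + (u^i*(d u*f) + ((i:ℕ):A)*(u^i*(d u*f))) := by
    rw [hleib, d_pow d hadd hleib]; push_cast; ring
  rw [hd1, iter_add d hadd, iter_add d hadd, iter_natmul d hadd,
    show v^(i+1)*H = v^i*(v*H) by ring, hco]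
  push_cast; ring

lemma R2 (m : ℕ) (f H : A) :
    LS d u v (m+1) f H =
      LS d u v m f (d H) - WS d u v m f (v*(d u)*H)
      + (WS d u v m (d u*f) (v*H) + LS d u v m (d u*f) (v*H) + LS d u v m (u*(d f)) (v*H)) := by
  -- LHS = ∑_{q∈range(m+1)} C(m,q)*(T q + T (q+1))
  have key : LS d u v (m+1) f H =
      ∑ q ∈ range (m+1), (m.choose q : A) *
        (d^[q] (u^q*f) * d^[m+1-q] (v^q*H)
          + d^[q+1] (u^(q+1)*f) * d^[m-q] (v^(q+1)*H)) := by
    rw [LS, Finset.sum_range_succ']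
    have hsplit : ∀ i ∈ range (m+1),
        ((m+1).choose (i+1) : A) * (d^[i+1] (u^(i+1)*f) * d^[m+1-(i+1)] (v^(i+1)*H))
        = (m.choose (i+1) : A) * (d^[i+1] (u^(i+1)*f) * d^[m+1-(i+1)] (v^(i+1)*H))
          + (m.choose i : A) * (d^[i+1] (u^(i+1)*f) * d^[m-i] (v^(i+1)*H)) := by
      intro i hi
      have : (m+1).choose (i+1) = m.choose (i+1) + m.choose i := by
        rw [Nat.choose_succ_succ']; omega
      rw [this, show m+1-(i+1) = m - i by omega]
      push_cast; ring
    rw [Finset.sum_congr rfl hsplit, Finset.sum_add_distrib]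
    have e1 : (∑ i ∈ range (m+1),
        (m.choose (i+1) : A) * (d^[i+1] (u^(i+1)*f) * d^[m+1-(i+1)] (v^(i+1)*H)))
        + ((m+1).choose 0 : A) * (d^[0] (u^0*f) * d^[m+1-0] (v^0*H))
        = ∑ q ∈ range (m+1), (m.choose q : A) * (d^[q] (u^q*f) * d^[m+1-q] (v^q*H)) := by
      have h2 := Finset.sum_range_succ'
        (fun q => (m.choose q : A) * (d^[q] (u^q*f) * d^[m+1-q] (v^q*H))) (m+1)
      rw [Finset.sum_range_succ _ (m+1), Nat.choose_succ_self] at h2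
      simp only [Nat.cast_zero, zero_mul, add_zero] at h2
      simp only [Nat.choose_zero_right] at h2 ⊢
      exact h2.symm
    rw [add_right_comm, e1, ← Finset.sum_add_distrib]
    exact Finset.sum_congr rfl fun q _ => by ring
  rw [key, LS, LS, LS, WS, WS, ← Finset.sum_sub_distrib, ← Finset.sum_add_distrib,
    ← Finset.sum_add_distrib, ← Finset.sum_add_distrib]
  refine Finset.sum_congr rfl fun q hq => ?_
  have hq' : q ≤ m := by simpa [Nat.lt_succ_iff] using hq
  have hsub : m + 1 - q = (m - q) + 1 := by omega
  rw [hsub, Function.iterate_succ_apply, Function.iterate_succ_apply]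
  have hdv : d (v^q*H) = v^q*(d H) - ((q:ℕ):A)*(v^q*(v*(d u)*H)) := by
    rw [hleib, d_vpow d u v hadd hleib huv]; push_cast; ring
  have hdu : d (u^(q+1)*f) = u^q*(u*(d f)) + (u^q*(d u*f) + ((q:ℕ):A)*(u^q*(d u*f))) := by
    rw [hleib, d_pow d hadd hleib]; push_cast; ring
  rw [hdv, hdu, iter_sub d hadd, iter_natmul d hadd, iter_add d hadd, iter_add d hadd,
    iter_natmul d hadd, show v^(q+1)*H = v^q*(v*H) by ring]
  push_cast; ring

end

section
variable (hadd : ∀ a b, d (a+b) = d a + d b)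
include hadd

lemma LS_add₂ (m : ℕ) (f H₁ H₂ : A) :
    LS d u v m f (H₁ + H₂) = LS d u v m f H₁ + LS d u v m f H₂ := by
  rw [LS, LS, LS, ← Finset.sum_add_distrib]
  refine Finset.sum_congr rfl fun q _ => ?_
  rw [show v^q * (H₁ + H₂) = v^q*H₁ + v^q*H₂ by ring, iter_add d hadd]
  ring

end

section
variable (hadd : ∀ a b, d (a+b) = d a + d b) (hleib : ∀ a b, d (a*b) = d a * b + a * d b)
  (huv : u * v = 1)
include hadd hleib huv

lemma ES_rec (m : ℕ) (f H : A) :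
    ES d u v (m+1) f H = ((m+1:ℕ):A) * LS d u v m 1 (d f * H)
      + ((m+1:ℕ):A) * (ES d u v m (d u * f) (v*H) - ES d u v m (d u) (v*(f*H))) := by
  rw [ES, Finset.sum_range_succ']
  have h0 : (((m+1).descFactorial (0+1) : ℕ) : A) *
      LS d u v (m+1-(0+1)) 1 ((d u * v)^0 * (d f) * H) = ((m+1:ℕ):A) * LS d u v m 1 (d f * H) := by
    rw [show (d u * v)^0 * (d f) * H = d f * H by ring]
    norm_num
  have h1 : ∀ i ∈ range m, (((m+1).descFactorial (i+1+1) : ℕ) : A) *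
      LS d u v (m+1-(i+1+1)) 1 ((d u * v)^(i+1) * (d f) * H)
      = ((m+1:ℕ):A) * (((m.descFactorial (i+1) : ℕ) : A) *
          LS d u v (m-(i+1)) 1 ((d u * v)^i * d (d u * f) * (v*H))
        - ((m.descFactorial (i+1) : ℕ) : A) *
          LS d u v (m-(i+1)) 1 ((d u * v)^i * d (d u) * (v*(f*H)))) := by
    intro i hi
    rw [← mul_sub, ← LS_sub₂ d u v hadd]
    have harg : (d u*v)^i * d (d u * f) * (v*H) - (d u*v)^i * d (d u) * (v*(f*H))
        = (d u*v)^(i+1) * d f * H := by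
      rw [hleib]; ring
    rw [harg, show m+1-(i+1+1) = m-(i+1) from by omega, Nat.succ_descFactorial_succ]
    push_cast; ring
  rw [Finset.sum_congr rfl h1, h0, ES, ES, ← Finset.sum_sub_distrib, Finset.mul_sum, add_comm]

lemma ES_cancel (m : ℕ) (f H : A) :
    ES d u v m (d u * f) (v*H) = ES d u v m f (v*(d u)*H) + ES d u v m (d u) (v*(f*H)) := by
  rw [ES, ES, ES, ← Finset.sum_add_distrib]
  refine Finset.sum_congr rfl fun i hi => ?_
  rw [← mul_add, ← LS_add₂ d u v hadd]
  have harg : (d u*v)^i * d f * (v*(d u)*H) + (d u*v)^i * d (d u) * (v*(f*H))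
      = (d u*v)^i * d (d u * f) * (v*H) := by
    rw [hleib]; ring
  rw [harg]

theorem AB (m : ℕ) :
    (∀ f H : A, LS d u v m f H = LS d u v m 1 (f*H)) ∧
    (∀ f H : A, WS d u v m f H = WS d u v m 1 (f*H) + ES d u v m f H) := by
  induction m with
  | zero =>
      constructor
      · intro f H; simp [LS]
      · intro f H; simp [WS, ES]
  | succ m ih =>
      obtain ⟨ihA, ihB⟩ := ih
      have hd1 : d 1 = 0 := d_one d hadd hleib
      have hB : ∀ f H : A, WS d u v (m+1) f H = WS d u v (m+1) 1 (f*H) + ES d u v (m+1) f H := by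
        intro f H
        rw [R3 d u v hadd hleib huv, R3 d u v hadd hleib huv, ES_rec d u v hadd hleib huv,
          mul_one, hd1, mul_zero, LS_zero₁ d u v hadd,
          ihB (d u * f) (v*H), ihB (d u) (v*(f*H)),
          ihA (d u * f) (v*H), ihA (u * d f) (v*H), ihA (d u) (v*(f*H)),
          show d u * f * (v*H) = d u * (v*(f*H)) by ring,
          show u * d f * (v*H) = (u*v) * (d f * H) by ring, huv, one_mul]
        ring
      refine ⟨?_, hB⟩
      intro f H
      rw [R2 d u v hadd hleib huv, R2 d u v hadd hleib huv,
        mul_one, hd1, mul_zero, LS_zero₁ d u v hadd,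
        show d (f*H) = d f * H + f * d H from by rw [hleib],
        LS_add₂ d u v hadd,
        ihA f (d H), ihB f (v*(d u)*H), ihB (d u * f) (v*H), ihB (d u) (v*(f*H)),
        ihA (d u * f) (v*H), ihA (u * d f) (v*H), ihA (d u) (v*(f*H)),
        ES_cancel d u v hadd hleib huv,
        show d u * f * (v*H) = d u * (v*(f*H)) by ring,
        show u * d f * (v*H) = (u*v) * (d f * H) by ring, huv, one_mul,
        show f * (v*(d u)*H) = v*(d u)*(f*H) by ring]
      ring

theorem master (m : ℕ) (f H : A) : LS d u v m f H = LS d u v m 1 (f*H) :=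
  (AB d u v hadd hleib huv m).1 f H

theorem abstract_final (m N : ℕ) :
    (∑ p ∈ range (m+1+1), ((m+1).choose p : A) *
        (d^[p] (u^p*1) * d^[m+1-p] (v^p * u^(N+1))))
      - d^[m+1] (u^(N+1))
    = ((m+1:ℕ) : A) * ∑ p ∈ range (m+1), (m.choose p : A) *
        (d^[p] (u^p*1) * d^[m-p] (v^p * (u^N * d u))) := by
  rw [Finset.sum_range_succ']
  have h0 : ((m+1).choose 0 : A) * (d^[0] (u^0*1) * d^[m+1-0] (v^0 * u^(N+1)))
      = d^[m+1] (u^(N+1)) := by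
    rw [show v^0 * u^(N+1) = u^(N+1) by ring]
    simp
  have h1 : ∀ j ∈ range (m+1), ((m+1).choose (j+1) : A) *
      (d^[j+1] (u^(j+1)*1) * d^[m+1-(j+1)] (v^(j+1) * u^(N+1)))
      = ((m+1:ℕ):A) * ((m.choose j : A) *
        (d^[j] (u^j * d u) * d^[m-j] (v^j * (v * u^(N+1))))) := by
    intro j hj
    have hco : ((j+1) * (m+1).choose (j+1) : ℕ) = (m+1) * m.choose j := by
      rw [Nat.mul_comm]
      exact (Nat.add_one_mul_choose_eq m j).symm
    rw [mul_one, Function.iterate_succ_apply, d_pow d hadd hleib, iter_natmul d hadd,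
      show m+1-(j+1) = m-j from by omega,
      show v^(j+1) * u^(N+1) = v^j * (v * u^(N+1)) by ring]
    have := congrArg (fun n : ℕ => (n : A)) hco
    push_cast at this
    calc ((m+1).choose (j+1) : A) * (((j+1:ℕ):A) * d^[j] (u^j * d u) *
            d^[m-j] (v^j * (v * u^(N+1))))
        = (((j:A)+1) * ((m+1).choose (j+1) : A)) * (d^[j] (u^j * d u) *
            d^[m-j] (v^j * (v * u^(N+1)))) := by push_cast; ring
      _ = (((m:A)+1) * (m.choose j : A)) * (d^[j] (u^j * d u) *
            d^[m-j] (v^j * (v * u^(N+1)))) := by rw [this]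
      _ = ((m+1:ℕ):A) * ((m.choose j : A) * (d^[j] (u^j * d u) *
            d^[m-j] (v^j * (v * u^(N+1))))) := by push_cast; ring
  rw [Finset.sum_congr rfl h1, h0, ← Finset.mul_sum]
  have hLS : (∑ j ∈ range (m+1), (m.choose j : A) *
      (d^[j] (u^j * d u) * d^[m-j] (v^j * (v * u^(N+1)))))
      = ∑ p ∈ range (m+1), (m.choose p : A) *
        (d^[p] (u^p*1) * d^[m-p] (v^p * (u^N * d u))) := by
    have e1 : LS d u v m (d u) (v * u^(N+1)) = LS d u v m 1 (d u * (v * u^(N+1))) :=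
      master d u v hadd hleib huv m _ _
    rw [show d u * (v * u^(N+1)) = (u*v) * (u^N * d u) by ring, huv, one_mul] at e1
    simpa [LS] using e1
  rw [hLS]
  ring

end
end Abstract

set_option synthInstance.maxHeartbeats 1000000
set_option maxHeartbeats 2000000
section Concrete

variable (J : Set ℝ)

/-- The subring of functions `ℝ → ℂ` that are `C^∞` on `J`. -/
noncomputable def Cinf : Subring (ℝ → ℂ) where
  carrier := {f | ContDiffOn ℝ (⊤ : ℕ∞) f J}
  mul_mem' hf hg := hf.mul hg
  one_mem' := contDiffOn_const
  add_mem' hf hg := hf.add hg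
  zero_mem' := contDiffOn_const
  neg_mem' hf := hf.neg

/-- The ideal of functions vanishing on `J`. -/
noncomputable def IZ : Ideal (Cinf J) where
  carrier := {f | ∀ x ∈ J, (f : ℝ → ℂ) x = 0}
  zero_mem' := by intro x hx; rfl
  add_mem' := by
    intro f g hf hg x hx
    have : ((f + g : Cinf J) : ℝ → ℂ) x = (f : ℝ → ℂ) x + (g : ℝ → ℂ) x := rfl
    rw [this, hf x hx, hg x hx, add_zero]
  smul_mem' := by
    intro c f hf x hx
    have : ((c • f : Cinf J) : ℝ → ℂ) x = (c : ℝ → ℂ) x * (f : ℝ → ℂ) x := rfl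
    rw [this, hf x hx, mul_zero]

variable (hJuniq : UniqueDiffOn ℝ J)

/-- Differentiation within `J` as a map on `Cinf J`. -/
noncomputable def dS (f : Cinf J) : Cinf J :=
  ⟨derivWithin (f : ℝ → ℂ) J, (f.2 : ContDiffOn ℝ (⊤ : ℕ∞) (f : ℝ → ℂ) J).derivWithin hJuniq (by simp)⟩

lemma mk_eq_mk_iff (f g : Cinf J) :
    Ideal.Quotient.mk (IZ J) f = Ideal.Quotient.mk (IZ J) g ↔
      ∀ x ∈ J, (f : ℝ → ℂ) x = (g : ℝ → ℂ) x := by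
  rw [Ideal.Quotient.eq]
  constructor
  · intro h x hx
    have := h x hx
    have h2 : ((f - g : Cinf J) : ℝ → ℂ) x = (f : ℝ → ℂ) x - (g : ℝ → ℂ) x := rfl
    rw [h2] at this
    linear_combination this
  · intro h x hx
    have h2 : ((f - g : Cinf J) : ℝ → ℂ) x = (f : ℝ → ℂ) x - (g : ℝ → ℂ) x := rfl
    rw [h2, h x hx, sub_self]

lemma dS_congr {f g : Cinf J}
    (h : Ideal.Quotient.mk (IZ J) f = Ideal.Quotient.mk (IZ J) g) :
    Ideal.Quotient.mk (IZ J) (dS J hJuniq f) = Ideal.Quotient.mk (IZ J) (dS J hJuniq g) := by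
  rw [mk_eq_mk_iff] at h ⊢
  intro x hx
  exact derivWithin_congr (fun y hy => h y hy) (h x hx)

/-- The induced derivation on the quotient. -/
noncomputable def dA : (Cinf J ⧸ IZ J) → (Cinf J ⧸ IZ J) := fun x =>
  Ideal.Quotient.mk (IZ J) (dS J hJuniq (Function.surjInv Ideal.Quotient.mk_surjective x))

lemma dA_mk (f : Cinf J) :
    dA J hJuniq (Ideal.Quotient.mk (IZ J) f) = Ideal.Quotient.mk (IZ J) (dS J hJuniq f) := by
  apply dS_congr
  exact Function.surjInv_eq Ideal.Quotient.mk_surjective _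

lemma diffble (f : Cinf J) {x : ℝ} (hx : x ∈ J) :
    DifferentiableWithinAt ℝ (f : ℝ → ℂ) J x :=
  (f.2.differentiableOn (by simp)) x hx

lemma dA_add : ∀ a b : Cinf J ⧸ IZ J,
    dA J hJuniq (a + b) = dA J hJuniq a + dA J hJuniq b := by
  intro a b
  obtain ⟨f, rfl⟩ := Ideal.Quotient.mk_surjective a
  obtain ⟨g, rfl⟩ := Ideal.Quotient.mk_surjective b
  rw [← map_add, dA_mk, dA_mk, dA_mk, ← map_add, mk_eq_mk_iff]
  intro x hx
  have h1 : ((f + g : Cinf J) : ℝ → ℂ) = (f : ℝ → ℂ) + (g : ℝ → ℂ) := rfl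
  have h2 : ((dS J hJuniq f + dS J hJuniq g : Cinf J) : ℝ → ℂ) x
      = derivWithin (f : ℝ → ℂ) J x + derivWithin (g : ℝ → ℂ) J x := rfl
  show derivWithin ((f + g : Cinf J) : ℝ → ℂ) J x = _
  rw [h1, h2]
  exact derivWithin_add (diffble J f hx) (diffble J g hx)

lemma dA_mul : ∀ a b : Cinf J ⧸ IZ J,
    dA J hJuniq (a * b) = dA J hJuniq a * b + a * dA J hJuniq b := by
  intro a b
  obtain ⟨f, rfl⟩ := Ideal.Quotient.mk_surjective a
  obtain ⟨g, rfl⟩ := Ideal.Quotient.mk_surjective b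
  rw [← map_mul, dA_mk, dA_mk, dA_mk, ← map_mul, ← map_mul, ← map_add, mk_eq_mk_iff]
  intro x hx
  have h1 : ((f * g : Cinf J) : ℝ → ℂ) = fun y => (f : ℝ → ℂ) y * (g : ℝ → ℂ) y := rfl
  have h2 : ((dS J hJuniq f * g + f * dS J hJuniq g : Cinf J) : ℝ → ℂ) x
      = derivWithin (f : ℝ → ℂ) J x * (g : ℝ → ℂ) x
        + (f : ℝ → ℂ) x * derivWithin (g : ℝ → ℂ) J x := rfl
  show derivWithin ((f * g : Cinf J) : ℝ → ℂ) J x = _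
  rw [h1, h2]
  exact derivWithin_mul (diffble J f hx) (diffble J g hx)

lemma dA_iter_mk (k : ℕ) (f : Cinf J) :
    (dA J hJuniq)^[k] (Ideal.Quotient.mk (IZ J) f)
      = Ideal.Quotient.mk (IZ J) ((dS J hJuniq)^[k] f) := by
  induction k generalizing f with
  | zero => rfl
  | succ k ih =>
      rw [Function.iterate_succ_apply, Function.iterate_succ_apply, dA_mk, ih]

lemma dS_iter_eqOn (k : ℕ) (f : Cinf J) :
    Set.EqOn (((dS J hJuniq)^[k] f : Cinf J) : ℝ → ℂ)
      (iteratedDerivWithin k (f : ℝ → ℂ) J) J := by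
  induction k generalizing f with
  | zero => intro x hx; simp
  | succ k ih =>
      intro x hx
      rw [Function.iterate_succ_apply, iteratedDerivWithin_succ']
      exact ih (dS J hJuniq f) hx

end Concrete

theorem stmt8 (J : Set ℝ) (hJconn : J.OrdConnected) (hJuniq : UniqueDiffOn ℝ J)
    (m N : ℕ) (ψ : ℝ → ℂ) (hψ : ContDiffOn ℝ (⊤ : ℕ∞) ψ J) (hψ0 : ∀ t ∈ J, ψ t ≠ 0) :
    ∀ t ∈ J,
      Phi J m ψ 1 (ψ ^ N * derivWithin ψ J) t =
        (1 / ((m : ℂ) + 1)) *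
          (Phi J (m + 1) ψ 1 (ψ ^ (N + 1)) t -
            iteratedDerivWithin (m + 1) (ψ ^ (N + 1)) J t) := by
  intro t ht
  have hψJ : ψ ∈ Cinf J := hψ
  have hψinvJ : ψ⁻¹ ∈ Cinf J := hψ.inv hψ0
  set u₀ : Cinf J := ⟨ψ, hψJ⟩ with hu₀
  set v₀ : Cinf J := ⟨ψ⁻¹, hψinvJ⟩ with hv₀
  set π := Ideal.Quotient.mk (IZ J) with hπ
  have huv : π u₀ * π v₀ = 1 := by
    rw [← map_mul, show (1 : Cinf J ⧸ IZ J) = π 1 from (map_one π).symm, mk_eq_mk_iff]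
    intro x hx
    have h1 : ((u₀ * v₀ : Cinf J) : ℝ → ℂ) x = ψ x * (ψ x)⁻¹ := rfl
    have h2 : ((1 : Cinf J) : ℝ → ℂ) x = 1 := rfl
    rw [h1, h2, mul_inv_cancel₀ (hψ0 x hx)]
  have habs := abstract_final (dA J hJuniq) (π u₀) (π v₀)
    (dA_add J hJuniq) (dA_mul J hJuniq) huv m N
  -- concrete counterparts
  set D := dS J hJuniq with hD
  have hX : π ((∑ p ∈ Finset.range (m+1+1), ((m+1).choose p : Cinf J) *
        (D^[p] (u₀^p * 1) * D^[m+1-p] (v₀^p * u₀^(N+1)))) - D^[m+1] (u₀^(N+1)))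
      = (∑ p ∈ Finset.range (m+1+1), ((m+1).choose p : Cinf J ⧸ IZ J) *
        ((dA J hJuniq)^[p] ((π u₀)^p * 1) *
          (dA J hJuniq)^[m+1-p] ((π v₀)^p * (π u₀)^(N+1))))
        - (dA J hJuniq)^[m+1] ((π u₀)^(N+1)) := by
    simp only [hD, hπ, map_sub, map_sum, map_mul, map_natCast, map_pow, map_one, ← dA_iter_mk]
  have hY : π (((m+1 : ℕ) : Cinf J) * ∑ p ∈ Finset.range (m+1), (m.choose p : Cinf J) *
        (D^[p] (u₀^p * 1) * D^[m-p] (v₀^p * (u₀^N * D u₀))))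
      = ((m+1 : ℕ) : Cinf J ⧸ IZ J) * ∑ p ∈ Finset.range (m+1), (m.choose p : Cinf J ⧸ IZ J) *
        ((dA J hJuniq)^[p] ((π u₀)^p * 1) *
          (dA J hJuniq)^[m-p] ((π v₀)^p * ((π u₀)^N * dA J hJuniq (π u₀)))) := by
    have hDu : π (D u₀) = dA J hJuniq (π u₀) := (dA_mk J hJuniq u₀).symm
    simp only [hD, hπ, map_sum, map_mul, map_natCast, map_pow, map_one, ← dA_iter_mk, hDu]
    rw [dA_mk]
  have hXY := (mk_eq_mk_iff J _ _).1 (hX.trans (habs.trans hY.symm))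
  have h := hXY t ht
  -- now unfold the coercions pointwise
  have hiter : ∀ (k : ℕ) (f : Cinf J), ((D^[k] f : Cinf J) : ℝ → ℂ) t
      = iteratedDerivWithin k (f : ℝ → ℂ) J t := fun k f => dS_iter_eqOn J hJuniq k f ht
  simp only [AddSubgroupClass.coe_sub, MulMemClass.coe_mul, AddSubmonoidClass.coe_finset_sum,
    SubmonoidClass.coe_pow, OneMemClass.coe_one, SubringClass.coe_natCast,
    Pi.sub_apply, Pi.mul_apply, Finset.sum_apply, Pi.pow_apply, Pi.one_apply,
    Pi.natCast_apply, hiter] at h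
  have hDu0 : ((D u₀ : Cinf J) : ℝ → ℂ) = derivWithin ψ J := rfl
  rw [hDu0] at h
  rw [show (∑ x ∈ Finset.range (m+1+1), ((m+1).choose x : ℂ) *
      (iteratedDerivWithin x (ψ^x*1) J t * iteratedDerivWithin (m+1-x) (ψ⁻¹^x * ψ^(N+1)) J t))
      = ∑ x ∈ Finset.range (m+1+1), ((m+1).choose x : ℂ) *
        iteratedDerivWithin x (ψ^x*1) J t * iteratedDerivWithin (m+1-x) (ψ⁻¹^x * ψ^(N+1)) J t
      from Finset.sum_congr rfl fun p _ => by ring,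
    show (∑ x ∈ Finset.range (m+1), (m.choose x : ℂ) *
      (iteratedDerivWithin x (ψ^x*1) J t *
        iteratedDerivWithin (m-x) (ψ⁻¹^x * (ψ^N * derivWithin ψ J)) J t))
      = ∑ x ∈ Finset.range (m+1), (m.choose x : ℂ) *
        iteratedDerivWithin x (ψ^x*1) J t *
        iteratedDerivWithin (m-x) (ψ⁻¹^x * (ψ^N * derivWithin ψ J)) J t
      from Finset.sum_congr rfl fun p _ => by ring] at h
  have hne : (m:ℂ) + 1 ≠ 0 := Nat.cast_add_one_ne_zero m
  rw [Phi, Phi, h]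
  push_cast
  rw [one_div, inv_mul_cancel_left₀ hne]
end

section
/- (Generalized third Frobenius–Stickelberger formula.) For every nowhere-vanishing smooth complex function ψ on a segment J and all natural numbers n, p with 1 ≤ p ≤ n, with F_m(ψ,q) = D^{m-1}(ψ^m D(ψ^q)) (and F_0(ψ,q) = ψ^q), one has 2·D^p F_{n-p}(ψ, -p) = Σ_{k=0}^{n} C(n,k) · F_k(ψ,-p) · F_{n-k}(ψ,-p). -/
open scoped Nat BigOperators

open scoped ContDiff

open Set

noncomputable def Lam (J : Set ℝ) (ψ : ℝ → ℂ) (r : ℤ) (u : ℝ → ℂ) (k : ℕ) : ℝ → ℂ :=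
  iteratedDerivWithin k (fun t => ψ t ^ ((k : ℤ) + r) * u t) J

section prim
variable {J : Set ℝ} {ψ : ℝ → ℂ}
variable (hu : UniqueDiffOn ℝ J) (hψ : ContDiffOn ℝ ∞ ψ J) (hψ0 : ∀ t ∈ J, ψ t ≠ 0)

include hψ hψ0 in
theorem smooth_zp (r : ℤ) : ContDiffOn ℝ ∞ (fun t => ψ t ^ r) J := by
  rcases r with n | n
  · simpa using hψ.pow n
  · simp only [zpow_negSucc]
    exact (hψ.pow (n+1)).inv (fun t ht => pow_ne_zero _ (hψ0 t ht))

include hψ hψ0 in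
theorem smooth_int (r : ℤ) {u : ℝ → ℂ} (hu' : ContDiffOn ℝ ∞ u J) :
    ContDiffOn ℝ ∞ (fun t => ψ t ^ r * u t) J :=
  (smooth_zp hψ hψ0 r).mul hu'

include hu hψ hψ0 in
theorem lam_diff (r : ℤ) {u : ℝ → ℂ} (hu' : ContDiffOn ℝ ∞ u J) (k : ℕ) :
    DifferentiableOn ℝ (Lam J ψ r u k) J :=
  (smooth_int hψ hψ0 _ hu').differentiableOn_iteratedDerivWithin
    (by exact_mod_cast WithTop.coe_lt_top _) hu

theorem lam_zero {r : ℤ} {u : ℝ → ℂ} : Lam J ψ r u 0 = fun t => ψ t ^ r * u t := by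
  funext t; simp [Lam]

theorem lam_exp_congr {m : ℕ} {w : ℝ → ℂ} {e₁ e₂ : ℤ} (h : e₁ = e₂) :
    iteratedDerivWithin m (fun s => ψ s ^ e₁ * w s) J =
      iteratedDerivWithin m (fun s => ψ s ^ e₂ * w s) J := by rw [h]

include hu in
theorem lam_succ (r : ℤ) (u : ℝ → ℂ) (k : ℕ) {t : ℝ} (ht : t ∈ J) :
    Lam J ψ r u (k+1) t = derivWithin (Lam J ψ (r+1) u k) J t := by
  have : Lam J ψ r u (k+1) = iteratedDerivWithin (k+1)
      (fun s => ψ s ^ ((k : ℤ) + (r+1)) * u s) J := by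
    rw [Lam]; exact lam_exp_congr (by push_cast; ring)
  rw [this, iteratedDerivWithin_succ]; rfl

include hu in
theorem derivWithin_zp_mul {t : ℝ} (ht : t ∈ J)
    (hψd : DifferentiableWithinAt ℝ ψ J t) {u : ℝ → ℂ}
    (hud : DifferentiableWithinAt ℝ u J t) (h0 : ψ t ≠ 0) (r : ℤ) :
    derivWithin (fun s => ψ s ^ r * u s) J t =
      (r : ℂ) * ψ t ^ (r - 1) * derivWithin ψ J t * u t + ψ t ^ r * derivWithin u J t := by
  have h1 : HasDerivWithinAt ψ (derivWithin ψ J t) J t := hψd.hasDerivWithinAt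
  have h2 : HasDerivWithinAt u (derivWithin u J t) J t := hud.hasDerivWithinAt
  have h3 : HasDerivWithinAt (fun s => ψ s ^ r) ((r:ℂ) * ψ t ^ (r-1) * derivWithin ψ J t) J t := by
    have := (hasDerivWithinAt_zpow r (ψ t) (Or.inl h0) Set.univ).hasDerivAt (by simp)
    simpa [mul_comm, Function.comp_def] using (this.comp_hasDerivWithinAt t h1)
  rw [(h3.fun_mul h2).derivWithin (hu t ht)]

include hu hψ hψ0 in
/-- `D Λ(ρ,u)_k = (k+ρ) Λ(ρ-1, ψ'u)_k + Λ(ρ, u')_k` on `J`. -/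
theorem lam_deriv (ρ : ℤ) {u : ℝ → ℂ} (hu' : ContDiffOn ℝ ∞ u J) (k : ℕ) {t : ℝ} (ht : t ∈ J) :
    derivWithin (Lam J ψ ρ u k) J t =
      ((k : ℂ) + (ρ : ℂ)) * Lam J ψ (ρ-1) (fun s => derivWithin ψ J s * u s) k t
        + Lam J ψ ρ (fun s => derivWithin u J s) k t := by
  set c : ℂ := (((k:ℤ) + ρ : ℤ) : ℂ) with hc
  set f1 : ℝ → ℂ := fun s => ψ s ^ ((k:ℤ) + (ρ-1)) * (derivWithin ψ J s * u s) with hf1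
  set f2 : ℝ → ℂ := fun s => ψ s ^ ((k:ℤ) + ρ) * derivWithin u J s with hf2
  have hder : ∀ s ∈ J, derivWithin (fun s' => ψ s' ^ ((k:ℤ) + ρ) * u s') J s
      = (c • f1 + f2) s := by
    intro s hs
    rw [derivWithin_zp_mul hu hs (hψ.differentiableOn (by simp) s hs)
      (hu'.differentiableOn (by simp) s hs) (hψ0 s hs)]
    have he : (k:ℤ) + ρ - 1 = (k:ℤ) + (ρ - 1) := by ring
    simp only [Pi.add_apply, Pi.smul_apply, hf1, hf2, hc, smul_eq_mul, he]
    push_cast; ring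
  have lek : (k : WithTop ℕ∞) ≤ ∞ := le_of_lt (by exact_mod_cast WithTop.coe_lt_top _)
  have hsm1 : ContDiffOn ℝ ∞ f1 J :=
    smooth_int hψ hψ0 _ ((hψ.derivWithin hu (by simp)).mul hu')
  have hsm2 : ContDiffOn ℝ ∞ f2 J :=
    smooth_int hψ hψ0 _ (hu'.derivWithin hu (by simp))
  calc derivWithin (Lam J ψ ρ u k) J t
      = iteratedDerivWithin (k+1) (fun s => ψ s ^ ((k:ℤ) + ρ) * u s) J t := by
        rw [Lam, iteratedDerivWithin_succ]
    _ = iteratedDerivWithin k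
          (derivWithin (fun s => ψ s ^ ((k:ℤ) + ρ) * u s) J) J t := by
        rw [iteratedDerivWithin_succ']
    _ = iteratedDerivWithin k (c • f1 + f2) J t :=
        iteratedDerivWithin_congr (fun s hs => hder s hs) ht
    _ = c * iteratedDerivWithin k f1 J t + iteratedDerivWithin k f2 J t := by
        have hcs : ContDiffOn ℝ (k : WithTop ℕ∞) (c • f1) J := by
          exact (hsm1.const_smul c).of_le lek
        rw [iteratedDerivWithin_add ht hu (hcs t ht) (hsm2.of_le lek t ht),
          iteratedDerivWithin_const_smul ht hu c (hsm1.of_le lek t ht)]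
        simp [smul_eq_mul]
    _ = ((k : ℂ) + (ρ : ℂ)) * Lam J ψ (ρ-1) (fun s => derivWithin ψ J s * u s) k t
          + Lam J ψ ρ (fun s => derivWithin u J s) k t := by
        simp only [Lam, hc, hf1, hf2]; push_cast; ring
end prim

theorem pascal_sum (n : ℕ) (g : ℕ → ℂ) :
    ∑ k ∈ Finset.range (n+2), ((n+1).choose k : ℂ) * g k
      = ∑ k ∈ Finset.range (n+1), (n.choose k : ℂ) * g k
        + ∑ k ∈ Finset.range (n+1), (n.choose k : ℂ) * g (k+1) := by
  rw [Finset.sum_range_succ' (fun k => ((n+1).choose k : ℂ) * g k) (n+1),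
      Finset.sum_range_succ' (fun k => (n.choose k : ℂ) * g k) n]
  have h1 : ∀ i, (((n+1).choose (i+1) : ℕ) : ℂ) * g (i+1)
      = (n.choose i : ℂ) * g (i+1) + (n.choose (i+1) : ℂ) * g (i+1) := by
    intro i
    rw [Nat.choose_succ_succ]
    push_cast; ring
  rw [Finset.sum_congr rfl (fun i _ => h1 i), Finset.sum_add_distrib]
  have h2 : ∑ i ∈ Finset.range (n+1), (n.choose (i+1) : ℂ) * g (i+1)
      = ∑ i ∈ Finset.range n, (n.choose (i+1) : ℂ) * g (i+1) := by
    rw [Finset.sum_range_succ]; simp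
  rw [h2]; simp; ring

theorem kweight_sum (m : ℕ) (h : ℕ → ℂ) :
    ∑ k ∈ Finset.range (m+2), (k : ℂ) * ((m+1).choose k : ℂ) * h k
      = ((m:ℂ)+1) * ∑ j ∈ Finset.range (m+1), (m.choose j : ℂ) * h (j+1) := by
  rw [Finset.sum_range_succ' (fun k => (k : ℂ) * ((m+1).choose k : ℂ) * h k) (m+1),
    Finset.mul_sum]
  simp only [Nat.cast_zero, zero_mul, add_zero]
  refine Finset.sum_congr rfl fun j hj => ?_
  have hc : ((m:ℂ)+1) * (m.choose j : ℂ) = ((m+1).choose (j+1) : ℂ) * ((j:ℂ)+1) := by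
    exact_mod_cast Nat.add_one_mul_choose_eq m j
  push_cast
  linear_combination (-(h (j+1))) * hc

theorem choose_swap {n k j : ℕ} (h : k + j ≤ n) :
    n.choose k * (n-k).choose j = n.choose j * (n-j).choose k := by
  have h1 := Nat.choose_mul (n := n) (k := k+j) (Nat.le_add_left j k)
  have h2 := Nat.choose_mul (n := n) (k := k+j) (Nat.le_add_right k j)
  rw [Nat.add_sub_cancel] at h1
  rw [Nat.add_sub_cancel_left] at h2
  have h3 : (k+j).choose j = (k+j).choose k := by
    have := Nat.choose_symm (Nat.le_add_right k j)
    rwa [Nat.add_sub_cancel_left] at this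
  rw [← h2, ← h3, h1]

theorem tri_swap (n : ℕ) (f g h : ℕ → ℂ) :
    ∑ k ∈ Finset.range (n+1), ∑ j ∈ Finset.range (n-k+1),
        (n.choose k : ℂ) * ((n-k).choose j : ℂ) * (f k * g j * h (n-k-j))
      = ∑ k ∈ Finset.range (n+1), ∑ j ∈ Finset.range (n-k+1),
        (n.choose k : ℂ) * ((n-k).choose j : ℂ) * (g k * f j * h (n-k-j)) := by
  rw [Finset.sum_sigma', Finset.sum_sigma']
  refine Finset.sum_nbij' (fun p => ⟨p.2, p.1⟩) (fun p => ⟨p.2, p.1⟩) ?_ ?_ ?_ ?_ ?_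
  · rintro ⟨k, j⟩ hp
    simp only [Finset.mem_sigma, Finset.mem_range] at hp ⊢
    omega
  · rintro ⟨k, j⟩ hp
    simp only [Finset.mem_sigma, Finset.mem_range] at hp ⊢
    omega
  · rintro ⟨k, j⟩ _; rfl
  · rintro ⟨k, j⟩ _; rfl
  · rintro ⟨k, j⟩ hp
    simp only [Finset.mem_sigma, Finset.mem_range] at hp
    have hkj : k + j ≤ n := by omega
    have hcc : (n.choose k : ℂ) * ((n-k).choose j : ℂ) = (n.choose j : ℂ) * ((n-j).choose k : ℂ) := by
      exact_mod_cast congrArg (Nat.cast : ℕ → ℂ) (choose_swap hkj)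
    have hsub : n - k - j = n - j - k := by omega
    simp only []
    rw [hsub, hcc]
    ring


noncomputable def SS (J : Set ℝ) (ψ : ℝ → ℂ) (r s : ℤ) (u v : ℝ → ℂ) (n : ℕ) (t : ℝ) : ℂ :=
  ∑ k ∈ Finset.range (n+1), (n.choose k : ℂ) * (Lam J ψ r u k t * Lam J ψ s v (n-k) t)

noncomputable def TT (J : Set ℝ) (ψ : ℝ → ℂ) (r s : ℤ) (u v : ℝ → ℂ) (m : ℕ) (t : ℝ) : ℂ :=
  ∑ k ∈ Finset.range (m+1), (m.choose k : ℂ) *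
    (2 * derivWithin (Lam J ψ (r+1) u k) J t * Lam J ψ (s+1) v (m-k) t
      - derivWithin (Lam J ψ r u k) J t * Lam J ψ (s+2) v (m-k) t
      - derivWithin (Lam J ψ (r+2) u k) J t * Lam J ψ s v (m-k) t)

def Dp (J : Set ℝ) (ψ : ℝ → ℂ) (n : ℕ) : Prop := ∀ (r s : ℤ) (u v : ℝ → ℂ),
  ContDiffOn ℝ ∞ u J → ContDiffOn ℝ ∞ v J → ∀ t ∈ J,
    SS J ψ r (s+1) u v n t = SS J ψ (r+1) s u v n t

def Tp (J : Set ℝ) (ψ : ℝ → ℂ) (m : ℕ) : Prop := ∀ (r s : ℤ) (u v : ℝ → ℂ),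
  ContDiffOn ℝ ∞ u J → ContDiffOn ℝ ∞ v J → ∀ t ∈ J, TT J ψ r s u v m t = 0

section core
variable {J : Set ℝ} {ψ : ℝ → ℂ}
variable (hu : UniqueDiffOn ℝ J) (hψ : ContDiffOn ℝ ∞ ψ J) (hψ0 : ∀ t ∈ J, ψ t ≠ 0)

include hu hψ hψ0 in
theorem hasDeriv_SS (r s : ℤ) {u v : ℝ → ℂ} (hsu : ContDiffOn ℝ ∞ u J)
    (hsv : ContDiffOn ℝ ∞ v J) (n : ℕ) {t : ℝ} (ht : t ∈ J) :
    HasDerivWithinAt (fun x => SS J ψ r s u v n x)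
      (∑ k ∈ Finset.range (n+1), (n.choose k : ℂ) *
        (derivWithin (Lam J ψ r u k) J t * Lam J ψ s v (n-k) t
          + Lam J ψ r u k t * derivWithin (Lam J ψ s v (n-k)) J t)) J t := by
  have H : ∀ k ∈ Finset.range (n+1),
      HasDerivWithinAt (fun x => (n.choose k : ℂ) * (Lam J ψ r u k x * Lam J ψ s v (n-k) x))
        ((n.choose k : ℂ) * (derivWithin (Lam J ψ r u k) J t * Lam J ψ s v (n-k) t
          + Lam J ψ r u k t * derivWithin (Lam J ψ s v (n-k)) J t)) J t := by
    intro k _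
    have h1 : HasDerivWithinAt (Lam J ψ r u k) (derivWithin (Lam J ψ r u k) J t) J t :=
      ((lam_diff hu hψ hψ0 r hsu k) t ht).hasDerivWithinAt
    have h2 : HasDerivWithinAt (Lam J ψ s v (n-k))
        (derivWithin (Lam J ψ s v (n-k)) J t) J t :=
      ((lam_diff hu hψ hψ0 s hsv (n-k)) t ht).hasDerivWithinAt
    exact (h1.mul h2).const_mul _
  simpa only [SS] using HasDerivWithinAt.fun_sum H

include hu hψ hψ0 in
theorem delta_base : Dp J ψ 0 := by
  intro r s u v hsu hsv t ht
  simp [SS, lam_zero, zpow_add₀ (hψ0 t ht)]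
  ring

include hu hψ hψ0 in
theorem theta_lemma (m : ℕ) (hD : Dp J ψ m) (hT : ∀ m', m = m' + 1 → Tp J ψ m') :
    Tp J ψ m := by
  intro r s u v hsu hsv t ht
  set w : ℝ → ℂ := fun x => derivWithin ψ J x * u x with hw
  have hws : ContDiffOn ℝ ∞ w J := (hψ.derivWithin hu (by simp)).mul hsu
  have hdus : ContDiffOn ℝ ∞ (fun x => derivWithin u J x) J := hsu.derivWithin hu (by simp)
  -- expand the derivatives
  have hexp : ∀ k ∈ Finset.range (m+1), (m.choose k : ℂ) *
      (2 * derivWithin (Lam J ψ (r+1) u k) J t * Lam J ψ (s+1) v (m-k) t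
        - derivWithin (Lam J ψ r u k) J t * Lam J ψ (s+2) v (m-k) t
        - derivWithin (Lam J ψ (r+2) u k) J t * Lam J ψ s v (m-k) t)
      = ((2 * ((k:ℂ) * ((m.choose k : ℂ) * (Lam J ψ r w k t * Lam J ψ (s+1) v (m-k) t)))
          - (k:ℂ) * ((m.choose k : ℂ) * (Lam J ψ (r-1) w k t * Lam J ψ (s+2) v (m-k) t))
          - (k:ℂ) * ((m.choose k : ℂ) * (Lam J ψ (r+1) w k t * Lam J ψ s v (m-k) t)))
        + ((2 * ((r:ℂ)+1)) * ((m.choose k : ℂ) * (Lam J ψ r w k t * Lam J ψ (s+1) v (m-k) t))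
          - (r:ℂ) * ((m.choose k : ℂ) * (Lam J ψ (r-1) w k t * Lam J ψ (s+2) v (m-k) t))
          - ((r:ℂ)+2) * ((m.choose k : ℂ) * (Lam J ψ (r+1) w k t * Lam J ψ s v (m-k) t)))
        + (2 * ((m.choose k : ℂ) * (Lam J ψ (r+1) (fun x => derivWithin u J x) k t * Lam J ψ (s+1) v (m-k) t))
          - (m.choose k : ℂ) * (Lam J ψ r (fun x => derivWithin u J x) k t * Lam J ψ (s+2) v (m-k) t)
          - (m.choose k : ℂ) * (Lam J ψ (r+2) (fun x => derivWithin u J x) k t * Lam J ψ s v (m-k) t))) := by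
    intro k _
    rw [lam_deriv hu hψ hψ0 (r+1) hsu k ht, lam_deriv hu hψ hψ0 r hsu k ht,
      lam_deriv hu hψ hψ0 (r+2) hsu k ht,
      show (r+1-1 : ℤ) = r from by ring, show (r+2-1 : ℤ) = r+1 from by ring]
    push_cast
    ring
  rw [TT, Finset.sum_congr rfl hexp, Finset.sum_add_distrib, Finset.sum_add_distrib]
  -- the three pieces
  have hP2 : ∑ k ∈ Finset.range (m+1),
      ((2 * ((r:ℂ)+1)) * ((m.choose k : ℂ) * (Lam J ψ r w k t * Lam J ψ (s+1) v (m-k) t))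
        - (r:ℂ) * ((m.choose k : ℂ) * (Lam J ψ (r-1) w k t * Lam J ψ (s+2) v (m-k) t))
        - ((r:ℂ)+2) * ((m.choose k : ℂ) * (Lam J ψ (r+1) w k t * Lam J ψ s v (m-k) t)))
      = (2 * ((r:ℂ)+1)) * SS J ψ r (s+1) w v m t
        - (r:ℂ) * SS J ψ (r-1) (s+2) w v m t
        - ((r:ℂ)+2) * SS J ψ (r+1) s w v m t := by
    simp only [SS, Finset.mul_sum, Finset.sum_sub_distrib]
  have e1 : SS J ψ (r-1) (s+2) w v m t = SS J ψ r (s+1) w v m t := by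
    have := hD (r-1) (s+1) w v hws hsv t ht
    rw [show (s+1+1 : ℤ) = s+2 from by ring, show (r-1+1 : ℤ) = r from by ring] at this
    exact this
  have e2 : SS J ψ r (s+1) w v m t = SS J ψ (r+1) s w v m t := hD r s w v hws hsv t ht
  have hP3 : ∑ k ∈ Finset.range (m+1),
      (2 * ((m.choose k : ℂ) * (Lam J ψ (r+1) (fun x => derivWithin u J x) k t * Lam J ψ (s+1) v (m-k) t))
        - (m.choose k : ℂ) * (Lam J ψ r (fun x => derivWithin u J x) k t * Lam J ψ (s+2) v (m-k) t)
        - (m.choose k : ℂ) * (Lam J ψ (r+2) (fun x => derivWithin u J x) k t * Lam J ψ s v (m-k) t))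
      = 2 * SS J ψ (r+1) (s+1) (fun x => derivWithin u J x) v m t
        - SS J ψ r (s+2) (fun x => derivWithin u J x) v m t
        - SS J ψ (r+2) s (fun x => derivWithin u J x) v m t := by
    simp only [SS, Finset.mul_sum, Finset.sum_sub_distrib]
  have e3 : SS J ψ r (s+2) (fun x => derivWithin u J x) v m t
      = SS J ψ (r+1) (s+1) (fun x => derivWithin u J x) v m t := by
    have := hD r (s+1) (fun x => derivWithin u J x) v hdus hsv t ht
    rw [show (s+1+1 : ℤ) = s+2 from by ring] at this
    exact this
  have e4 : SS J ψ (r+1) (s+1) (fun x => derivWithin u J x) v m t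
      = SS J ψ (r+2) s (fun x => derivWithin u J x) v m t := by
    have := hD (r+1) s (fun x => derivWithin u J x) v hdus hsv t ht
    rw [show (r+1+1 : ℤ) = r+2 from by ring] at this
    exact this
  -- the k-weighted piece
  have hP1 : ∑ k ∈ Finset.range (m+1),
      (2 * ((k:ℂ) * ((m.choose k : ℂ) * (Lam J ψ r w k t * Lam J ψ (s+1) v (m-k) t)))
        - (k:ℂ) * ((m.choose k : ℂ) * (Lam J ψ (r-1) w k t * Lam J ψ (s+2) v (m-k) t))
        - (k:ℂ) * ((m.choose k : ℂ) * (Lam J ψ (r+1) w k t * Lam J ψ s v (m-k) t))) = 0 := by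
    rcases m with _ | m'
    · simp
    · have hK : ∀ ρ σ : ℤ, ∑ k ∈ Finset.range (m'+2),
          (k:ℂ) * ((m'+1).choose k : ℂ) * (Lam J ψ ρ w k t * Lam J ψ σ v (m'+1-k) t)
          = ((m':ℂ)+1) * ∑ j ∈ Finset.range (m'+1), ((m').choose j : ℂ) *
              (derivWithin (Lam J ψ (ρ+1) w j) J t * Lam J ψ σ v (m'-j) t) := by
        intro ρ σ
        rw [kweight_sum m' (fun k => Lam J ψ ρ w k t * Lam J ψ σ v (m'+1-k) t)]
        congr 1
        refine Finset.sum_congr rfl fun j hj => ?_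
        rw [Nat.succ_sub_succ, lam_succ hu ρ w j ht]
      have hTT : TT J ψ r s w v m' t = 0 := hT m' rfl r s w v hws hsv t ht
      rw [TT] at hTT
      have expand2 : ∀ k ∈ Finset.range (m'+2),
          (2 * ((k:ℂ) * (((m'+1).choose k : ℂ) * (Lam J ψ r w k t * Lam J ψ (s+1) v (m'+1-k) t)))
            - (k:ℂ) * (((m'+1).choose k : ℂ) * (Lam J ψ (r-1) w k t * Lam J ψ (s+2) v (m'+1-k) t))
            - (k:ℂ) * (((m'+1).choose k : ℂ) * (Lam J ψ (r+1) w k t * Lam J ψ s v (m'+1-k) t)))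
          = 2 * ((k:ℂ) * ((m'+1).choose k : ℂ) * (Lam J ψ r w k t * Lam J ψ (s+1) v (m'+1-k) t))
            - ((k:ℂ) * ((m'+1).choose k : ℂ) * (Lam J ψ (r-1) w k t * Lam J ψ (s+2) v (m'+1-k) t))
            - ((k:ℂ) * ((m'+1).choose k : ℂ) * (Lam J ψ (r+1) w k t * Lam J ψ s v (m'+1-k) t)) := by
        intro k _; ring
      rw [Finset.sum_congr rfl expand2, Finset.sum_sub_distrib, Finset.sum_sub_distrib,
        ← Finset.mul_sum, hK r (s+1), hK (r-1) (s+2), hK (r+1) s,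
        show (r-1+1 : ℤ) = r from by ring, show (r+1+1 : ℤ) = r+2 from by ring]
      have expand3 : ∀ j ∈ Finset.range (m'+1), ((m').choose j : ℂ) *
          (2 * derivWithin (Lam J ψ (r+1) w j) J t * Lam J ψ (s+1) v (m'-j) t
            - derivWithin (Lam J ψ r w j) J t * Lam J ψ (s+2) v (m'-j) t
            - derivWithin (Lam J ψ (r+2) w j) J t * Lam J ψ s v (m'-j) t)
          = 2 * (((m').choose j : ℂ) * (derivWithin (Lam J ψ (r+1) w j) J t * Lam J ψ (s+1) v (m'-j) t))
            - ((m').choose j : ℂ) * (derivWithin (Lam J ψ r w j) J t * Lam J ψ (s+2) v (m'-j) t)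
            - ((m').choose j : ℂ) * (derivWithin (Lam J ψ (r+2) w j) J t * Lam J ψ s v (m'-j) t) := by
        intro j _; ring
      rw [Finset.sum_congr rfl expand3, Finset.sum_sub_distrib, Finset.sum_sub_distrib,
        ← Finset.mul_sum] at hTT
      linear_combination ((m':ℂ)+1) * hTT
  rw [hP1, hP2, hP3]
  linear_combination (-(r:ℂ)) * e1 + ((r:ℂ)+2) * e2 + (-1 : ℂ) * e3 + e4
include hu hψ hψ0 in
theorem delta_step (n : ℕ) (hDn : Dp J ψ n) (hTn : Tp J ψ n) : Dp J ψ (n+1) := by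
  intro r s u v hsu hsv t ht
  -- E1 : expand LHS
  have E1 : SS J ψ r (s+1) u v (n+1) t
      = (∑ k ∈ Finset.range (n+1), (n.choose k : ℂ) *
          (Lam J ψ r u k t * derivWithin (Lam J ψ (s+2) v (n-k)) J t))
        + (∑ k ∈ Finset.range (n+1), (n.choose k : ℂ) *
          (derivWithin (Lam J ψ (r+1) u k) J t * Lam J ψ (s+1) v (n-k) t)) := by
    rw [SS, show n+1+1 = n+2 from rfl,
      pascal_sum n (fun k => Lam J ψ r u k t * Lam J ψ (s+1) v (n+1-k) t)]
    congr 1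
    · refine Finset.sum_congr rfl fun k hk => ?_
      have hk' : k ≤ n := Nat.lt_succ_iff.mp (Finset.mem_range.mp hk)
      rw [Nat.succ_sub hk', lam_succ hu (s+1) v (n-k) ht,
        show (s+1+1 : ℤ) = s+2 from by ring]
    · refine Finset.sum_congr rfl fun k hk => ?_
      rw [Nat.succ_sub_succ, lam_succ hu r u k ht]
  have E2 : SS J ψ (r+1) s u v (n+1) t
      = (∑ k ∈ Finset.range (n+1), (n.choose k : ℂ) *
          (Lam J ψ (r+1) u k t * derivWithin (Lam J ψ (s+1) v (n-k)) J t))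
        + (∑ k ∈ Finset.range (n+1), (n.choose k : ℂ) *
          (derivWithin (Lam J ψ (r+2) u k) J t * Lam J ψ s v (n-k) t)) := by
    rw [SS, show n+1+1 = n+2 from rfl,
      pascal_sum n (fun k => Lam J ψ (r+1) u k t * Lam J ψ s v (n+1-k) t)]
    congr 1
    · refine Finset.sum_congr rfl fun k hk => ?_
      have hk' : k ≤ n := Nat.lt_succ_iff.mp (Finset.mem_range.mp hk)
      rw [Nat.succ_sub hk', lam_succ hu s v (n-k) ht]
    · refine Finset.sum_congr rfl fun k hk => ?_
      rw [Nat.succ_sub_succ, lam_succ hu (r+1) u k ht,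
        show (r+1+1 : ℤ) = r+2 from by ring]
  -- E3 : derivative of the order-n identity
  have hEq : Set.EqOn (fun x => SS J ψ r (s+2) u v n x)
      (fun x => SS J ψ (r+1) (s+1) u v n x) J := by
    intro x hx
    have := hDn r (s+1) u v hsu hsv x hx
    rw [show (s+1+1 : ℤ) = s+2 from by ring] at this
    exact this
  have hd1 := (hasDeriv_SS hu hψ hψ0 r (s+2) hsu hsv n ht).derivWithin (hu t ht)
  have hd2 := (hasDeriv_SS hu hψ hψ0 (r+1) (s+1) hsu hsv n ht).derivWithin (hu t ht)
  have E3 : ∑ k ∈ Finset.range (n+1), (n.choose k : ℂ) *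
        (derivWithin (Lam J ψ r u k) J t * Lam J ψ (s+2) v (n-k) t
          + Lam J ψ r u k t * derivWithin (Lam J ψ (s+2) v (n-k)) J t)
      = ∑ k ∈ Finset.range (n+1), (n.choose k : ℂ) *
        (derivWithin (Lam J ψ (r+1) u k) J t * Lam J ψ (s+1) v (n-k) t
          + Lam J ψ (r+1) u k t * derivWithin (Lam J ψ (s+1) v (n-k)) J t) := by
    rw [← hd1, ← hd2]
    exact derivWithin_congr hEq (hEq ht)
  -- split E3 into four sums
  have split : ∀ (X Y : ℕ → ℂ), ∑ k ∈ Finset.range (n+1), (n.choose k : ℂ) * (X k + Y k)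
      = ∑ k ∈ Finset.range (n+1), (n.choose k : ℂ) * X k
        + ∑ k ∈ Finset.range (n+1), (n.choose k : ℂ) * Y k := by
    intro X Y
    rw [← Finset.sum_add_distrib]
    exact Finset.sum_congr rfl fun k _ => by ring
  rw [split (fun k => derivWithin (Lam J ψ r u k) J t * Lam J ψ (s+2) v (n-k) t)
      (fun k => Lam J ψ r u k t * derivWithin (Lam J ψ (s+2) v (n-k)) J t),
    split (fun k => derivWithin (Lam J ψ (r+1) u k) J t * Lam J ψ (s+1) v (n-k) t)
      (fun k => Lam J ψ (r+1) u k t * derivWithin (Lam J ψ (s+1) v (n-k)) J t)] at E3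
  -- E4 : the Theta identity at order n
  have hTT := hTn r s u v hsu hsv t ht
  have expand4 : ∀ k ∈ Finset.range (n+1), (n.choose k : ℂ) *
      (2 * derivWithin (Lam J ψ (r+1) u k) J t * Lam J ψ (s+1) v (n-k) t
        - derivWithin (Lam J ψ r u k) J t * Lam J ψ (s+2) v (n-k) t
        - derivWithin (Lam J ψ (r+2) u k) J t * Lam J ψ s v (n-k) t)
      = 2 * ((n.choose k : ℂ) * (derivWithin (Lam J ψ (r+1) u k) J t * Lam J ψ (s+1) v (n-k) t))
        - (n.choose k : ℂ) * (derivWithin (Lam J ψ r u k) J t * Lam J ψ (s+2) v (n-k) t)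
        - (n.choose k : ℂ) * (derivWithin (Lam J ψ (r+2) u k) J t * Lam J ψ s v (n-k) t) := by
    intro k _; ring
  rw [TT, Finset.sum_congr rfl expand4, Finset.sum_sub_distrib, Finset.sum_sub_distrib,
    ← Finset.mul_sum] at hTT
  rw [E1, E2]
  linear_combination E3 + hTT

include hu hψ hψ0 in
theorem master_s13 (n : ℕ) : Dp J ψ n ∧ Tp J ψ n := by
  induction n with
  | zero =>
    refine ⟨delta_base hu hψ hψ0, ?_⟩
    exact theta_lemma hu hψ hψ0 0 (delta_base hu hψ hψ0) (fun m' h => by omega)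
  | succ n ih =>
    have hD := delta_step hu hψ hψ0 n ih.1 ih.2
    refine ⟨hD, theta_lemma hu hψ hψ0 (n+1) hD (fun m' h => ?_)⟩
    have hmn : m' = n := by omega
    rw [hmn]; exact ih.2

include hu in
theorem iterated_smooth {f : ℝ → ℂ} (hf : ContDiffOn ℝ ∞ f J) (m : ℕ) :
    ContDiffOn ℝ ∞ (iteratedDerivWithin m f J) J := by
  induction m with
  | zero => simpa using hf
  | succ m ih =>
    exact (ih.derivWithin hu (by simp)).congr
      (fun x hx => by rw [iteratedDerivWithin_succ])

include hu in
theorem iter_comp (i j : ℕ) (f : ℝ → ℂ) :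
    Set.EqOn (iteratedDerivWithin i (iteratedDerivWithin j f J) J)
      (iteratedDerivWithin (i+j) f J) J := by
  induction i with
  | zero => intro t ht; simp
  | succ i ih =>
    intro t ht
    rw [iteratedDerivWithin_succ,
      derivWithin_congr ih (ih ht), show i+1+j = (i+j)+1 from by omega,
      iteratedDerivWithin_succ]
end core

noncomputable def Rv (J : Set ℝ) (ψ : ℝ → ℂ) (F : ℝ → ℂ) : ℕ → ℝ → ℂ
  | 0 => F
  | (m+1) => Lam J ψ 1 (fun x => derivWithin F J x) m

section core2
variable {J : Set ℝ} {ψ : ℝ → ℂ}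
variable (hu : UniqueDiffOn ℝ J) (hψ : ContDiffOn ℝ ∞ ψ J) (hψ0 : ∀ t ∈ J, ψ t ≠ 0)

include hu hψ hψ0 in
theorem Rv_diff {F : ℝ → ℂ} (hF : ContDiffOn ℝ ∞ F J) (m : ℕ) :
    DifferentiableOn ℝ (Rv J ψ F m) J := by
  cases m with
  | zero => exact hF.differentiableOn (by simp)
  | succ m => exact lam_diff hu hψ hψ0 1 (hF.derivWithin hu (by simp)) m

include hu in
theorem dRv {F : ℝ → ℂ} (m : ℕ) {t : ℝ} (ht : t ∈ J) :
    derivWithin (Rv J ψ F m) J t = Lam J ψ 0 (fun x => derivWithin F J x) m t := by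
  cases m with
  | zero =>
    simp only [Rv, Lam, iteratedDerivWithin_zero]
    norm_num
  | succ m =>
    rw [show Rv J ψ F (m+1) = Lam J ψ 1 (fun x => derivWithin F J x) m from rfl,
      show (1 : ℤ) = 0+1 from by norm_num, ← lam_succ hu 0 (fun x => derivWithin F J x) m ht]

include hu hψ0 in
theorem lam_mul_psi (r : ℤ) {h : ℝ → ℂ} (m : ℕ) :
    Set.EqOn (Lam J ψ r (fun x => ψ x * h x) m) (Lam J ψ (r+1) h m) J := by
  apply iteratedDerivWithin_congr
  intro x hx
  have : ψ x ^ ((m:ℤ) + r) * (ψ x * h x) = ψ x ^ ((m:ℤ) + (r+1)) * h x := by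
    rw [show (m:ℤ) + (r+1) = ((m:ℤ) + r) + 1 from by ring,
      zpow_add₀ (hψ0 x hx) ((m:ℤ) + r) 1, zpow_one]
    ring
  simpa using this

include hu hψ hψ0 in
theorem star (n : ℕ) : ∀ (h : ℝ → ℂ), ContDiffOn ℝ ∞ h J → ∀ t ∈ J,
    Lam J ψ 1 h n t = ∑ k ∈ Finset.range (n+1), (n.choose k : ℂ) *
      (Rv J ψ ψ k t * Lam J ψ 0 h (n-k) t) := by
  induction n with
  | zero =>
    intro h hh t ht
    simp [Lam, Rv]
  | succ n IH =>
    intro h hh t ht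
    have hψh : ContDiffOn ℝ ∞ (fun x => ψ x * h x) J := hψ.mul hh
    have hdψ : ContDiffOn ℝ ∞ (fun x => derivWithin ψ J x) J := hψ.derivWithin hu (by simp)
    -- step 1: Lam 1 h (n+1) t = derivWithin (big sum) t
    have step2 : Set.EqOn (Lam J ψ (1+1) h n)
        (fun x => ∑ k ∈ Finset.range (n+1), (n.choose k : ℂ) *
          (Rv J ψ ψ k x * Lam J ψ 0 (fun y => ψ y * h y) (n-k) x)) J := by
      intro x hx
      rw [← lam_mul_psi hu hψ0 1 n hx]
      exact IH (fun y => ψ y * h y) hψh x hx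
    have hRd : ∀ k, DifferentiableOn ℝ (Rv J ψ ψ k) J := Rv_diff hu hψ hψ0 hψ
    have hLd : ∀ m, DifferentiableOn ℝ (Lam J ψ 0 (fun y => ψ y * h y) m) J :=
      fun m => lam_diff hu hψ hψ0 0 hψh m
    have hder : HasDerivWithinAt (fun x => ∑ k ∈ Finset.range (n+1), (n.choose k : ℂ) *
          (Rv J ψ ψ k x * Lam J ψ 0 (fun y => ψ y * h y) (n-k) x))
        (∑ k ∈ Finset.range (n+1), (n.choose k : ℂ) *
          (derivWithin (Rv J ψ ψ k) J t * Lam J ψ 0 (fun y => ψ y * h y) (n-k) t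
            + Rv J ψ ψ k t * derivWithin (Lam J ψ 0 (fun y => ψ y * h y) (n-k)) J t)) J t := by
      apply HasDerivWithinAt.fun_sum
      intro k _
      exact (((hRd k t ht).hasDerivWithinAt).mul ((hLd (n-k) t ht).hasDerivWithinAt)).const_mul _
    have key : Lam J ψ 1 h (n+1) t = ∑ k ∈ Finset.range (n+1), (n.choose k : ℂ) *
          (derivWithin (Rv J ψ ψ k) J t * Lam J ψ 0 (fun y => ψ y * h y) (n-k) t
            + Rv J ψ ψ k t * derivWithin (Lam J ψ 0 (fun y => ψ y * h y) (n-k)) J t) := by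
      rw [lam_succ hu 1 h n ht, derivWithin_congr step2 (step2 ht),
        hder.derivWithin (hu t ht)]
    -- rewrite both derivative pieces
    have rew : ∀ k ∈ Finset.range (n+1), (n.choose k : ℂ) *
          (derivWithin (Rv J ψ ψ k) J t * Lam J ψ 0 (fun y => ψ y * h y) (n-k) t
            + Rv J ψ ψ k t * derivWithin (Lam J ψ 0 (fun y => ψ y * h y) (n-k)) J t)
        = (n.choose k : ℂ) * (Lam J ψ 0 (fun x => derivWithin ψ J x) k t
              * Lam J ψ 1 h (n-k) t)
          + (n.choose k : ℂ) * (Rv J ψ ψ k t * Lam J ψ 0 h ((n-k)+1) t) := by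
      intro k _
      have hone : (0+1 : ℤ) = 1 := by norm_num
      have hls : derivWithin (Lam J ψ 1 h (n-k)) J t = Lam J ψ 0 h ((n-k)+1) t := by
        have h2 := lam_succ (ψ := ψ) hu 0 h (n-k) ht
        rw [hone] at h2
        exact h2.symm
      have hmp : Lam J ψ 0 (fun y => ψ y * h y) (n-k) t = Lam J ψ 1 h (n-k) t := by
        have h3 := lam_mul_psi (ψ := ψ) hu hψ0 (h := h) 0 (n-k) ht
        rwa [hone] at h3
      rw [dRv hu k ht,
        derivWithin_congr (lam_mul_psi hu hψ0 0 (n-k)) (lam_mul_psi hu hψ0 0 (n-k) ht),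
        hone, hls, hmp]
      ring
    rw [key, Finset.sum_congr rfl rew, Finset.sum_add_distrib]
    -- first piece via the Delta lemma
    have hdel := (master_s13 hu hψ hψ0 n).1 0 0 (fun x => derivWithin ψ J x) h hdψ hh t ht
    rw [SS, SS, show (0+1 : ℤ) = 1 from by norm_num] at hdel
    -- assemble with Pascal
    rw [show n+1+1 = n+2 from rfl,
      pascal_sum n (fun k => Rv J ψ ψ k t * Lam J ψ 0 h (n+1-k) t)]
    have left1 : ∑ k ∈ Finset.range (n+1), (n.choose k : ℂ) *
        (Lam J ψ 0 (fun x => derivWithin ψ J x) k t * Lam J ψ 1 h (n-k) t)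
        = ∑ k ∈ Finset.range (n+1), (n.choose k : ℂ) *
          (Rv J ψ ψ (k+1) t * Lam J ψ 0 h (n-k) t) := by
      rw [hdel]; rfl
    rw [left1]
    have right1 : ∑ k ∈ Finset.range (n+1), (n.choose k : ℂ) *
          (Rv J ψ ψ k t * Lam J ψ 0 h (n+1-k) t)
        = ∑ k ∈ Finset.range (n+1), (n.choose k : ℂ) *
          (Rv J ψ ψ k t * Lam J ψ 0 h ((n-k)+1) t) := by
      refine Finset.sum_congr rfl fun k hk => ?_
      rw [Nat.succ_sub (Nat.lt_succ_iff.mp (Finset.mem_range.mp hk))]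
    have right2 : ∑ k ∈ Finset.range (n+1), (n.choose k : ℂ) *
          (Rv J ψ ψ (k+1) t * Lam J ψ 0 h (n+1-(k+1)) t)
        = ∑ k ∈ Finset.range (n+1), (n.choose k : ℂ) *
          (Rv J ψ ψ (k+1) t * Lam J ψ 0 h (n-k) t) := by
      refine Finset.sum_congr rfl fun k hk => ?_
      rw [Nat.succ_sub_succ]
    rw [right1, right2]
    ring
end core2

theorem binom_comm (m : ℕ) (g h : ℕ → ℂ) :
    ∑ j ∈ Finset.range (m+1), (m.choose j : ℂ) * (g j * h (m-j))
      = ∑ j ∈ Finset.range (m+1), (m.choose j : ℂ) * (h j * g (m-j)) := by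
  have := Finset.sum_range_reflect (fun j => (m.choose j : ℂ) * (g j * h (m-j))) (m+1)
  rw [← this]
  refine Finset.sum_congr rfl fun j hj => ?_
  have hj' : j ≤ m := Nat.lt_succ_iff.mp (Finset.mem_range.mp hj)
  rw [show m+1-1-j = m-j from by omega, Nat.sub_sub_self hj', Nat.choose_symm hj']
  ring

theorem tri_inner (n : ℕ) (f g h : ℕ → ℂ) :
    ∑ k ∈ Finset.range (n+1), ∑ j ∈ Finset.range (n-k+1),
        (n.choose k : ℂ) * ((n-k).choose j : ℂ) * (f k * g j * h (n-k-j))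
      = ∑ k ∈ Finset.range (n+1), ∑ j ∈ Finset.range (n-k+1),
        (n.choose k : ℂ) * ((n-k).choose j : ℂ) * (f k * h j * g (n-k-j)) := by
  refine Finset.sum_congr rfl fun k hk => ?_
  have e1 : ∀ (g₁ h₁ : ℕ → ℂ), ∑ j ∈ Finset.range (n-k+1),
        (n.choose k : ℂ) * ((n-k).choose j : ℂ) * (f k * g₁ j * h₁ (n-k-j))
      = ((n.choose k : ℂ) * f k) * ∑ j ∈ Finset.range (n-k+1),
          ((n-k).choose j : ℂ) * (g₁ j * h₁ (n-k-j)) := by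
    intro g₁ h₁
    rw [Finset.mul_sum]
    exact Finset.sum_congr rfl fun j _ => by ring
  rw [e1 g h, e1 h g, binom_comm (n-k) g h]

section core3
variable {J : Set ℝ} {ψ : ℝ → ℂ}
variable (hu : UniqueDiffOn ℝ J) (hψ : ContDiffOn ℝ ∞ ψ J) (hψ0 : ∀ t ∈ J, ψ t ≠ 0)

include hu hψ hψ0 in
theorem mulF : ∀ (n : ℕ) (F G : ℝ → ℂ), ContDiffOn ℝ ∞ F J → ContDiffOn ℝ ∞ G J →
    ∀ t ∈ J, Rv J ψ (fun x => F x * G x) n t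
      = ∑ k ∈ Finset.range (n+1), (n.choose k : ℂ) * (Rv J ψ F k t * Rv J ψ G (n-k) t) := by
  intro n
  induction n using Nat.strong_induction_on with
  | _ n IH =>
    match n with
    | 0 => intro F G hF hG t ht; simp [Rv]
    | (n+1) =>
      intro F G hF hG t ht
      have hFG : ContDiffOn ℝ ∞ (fun x => F x * G x) J := hF.mul hG
      have hdFG : ContDiffOn ℝ ∞ (fun x => derivWithin (fun y => F y * G y) J x) J :=
        hFG.derivWithin hu (by simp)
      have hdF : ContDiffOn ℝ ∞ (fun x => derivWithin F J x) J := hF.derivWithin hu (by simp)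
      have hdG : ContDiffOn ℝ ∞ (fun x => derivWithin G J x) J := hG.derivWithin hu (by simp)
      -- LHS via star
      have hL : Rv J ψ (fun x => F x * G x) (n+1) t
          = ∑ k ∈ Finset.range (n+1), (n.choose k : ℂ) * (Rv J ψ ψ k t *
              Lam J ψ 0 (fun x => derivWithin (fun y => F y * G y) J x) (n-k) t) :=
        star hu hψ hψ0 n _ hdFG t ht
      -- rewrite the inner Lam as derivative of a product expansion
      have hinner : ∀ k ∈ Finset.range (n+1),
          Lam J ψ 0 (fun x => derivWithin (fun y => F y * G y) J x) (n-k) t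
          = ∑ j ∈ Finset.range ((n-k)+1), ((n-k).choose j : ℂ) *
              (Lam J ψ 0 (fun x => derivWithin F J x) j t * Rv J ψ G (n-k-j) t
                + Rv J ψ F j t * Lam J ψ 0 (fun x => derivWithin G J x) (n-k-j) t) := by
        intro k hk
        have hm : n-k < n+1 := by omega
        have hEq : Set.EqOn (Rv J ψ (fun x => F x * G x) (n-k))
            (fun x => ∑ j ∈ Finset.range ((n-k)+1), ((n-k).choose j : ℂ) *
              (Rv J ψ F j x * Rv J ψ G (n-k-j) x)) J := by
          intro x hx
          exact IH (n-k) hm F G hF hG x hx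
        have hds : HasDerivWithinAt (fun x => ∑ j ∈ Finset.range ((n-k)+1), ((n-k).choose j : ℂ) *
              (Rv J ψ F j x * Rv J ψ G (n-k-j) x))
            (∑ j ∈ Finset.range ((n-k)+1), ((n-k).choose j : ℂ) *
              (derivWithin (Rv J ψ F j) J t * Rv J ψ G (n-k-j) t
                + Rv J ψ F j t * derivWithin (Rv J ψ G (n-k-j)) J t)) J t := by
          apply HasDerivWithinAt.fun_sum
          intro j _
          exact (((Rv_diff hu hψ hψ0 hF j t ht).hasDerivWithinAt).mul
            ((Rv_diff hu hψ hψ0 hG (n-k-j) t ht).hasDerivWithinAt)).const_mul _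
        rw [← dRv hu (n-k) ht, derivWithin_congr hEq (hEq ht), hds.derivWithin (hu t ht)]
        refine Finset.sum_congr rfl fun j _ => ?_
        rw [dRv hu j ht, dRv hu (n-k-j) ht]
      -- now massage into trinomial double sums
      have hL2 : Rv J ψ (fun x => F x * G x) (n+1) t
          = (∑ k ∈ Finset.range (n+1), ∑ j ∈ Finset.range (n-k+1),
              (n.choose k : ℂ) * ((n-k).choose j : ℂ) *
                (Rv J ψ ψ k t * Lam J ψ 0 (fun x => derivWithin F J x) j t * Rv J ψ G (n-k-j) t))
            + (∑ k ∈ Finset.range (n+1), ∑ j ∈ Finset.range (n-k+1),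
              (n.choose k : ℂ) * ((n-k).choose j : ℂ) *
                (Rv J ψ ψ k t * Rv J ψ F j t * Lam J ψ 0 (fun x => derivWithin G J x) (n-k-j) t)) := by
        rw [hL, Finset.sum_congr rfl (fun k hk => by rw [hinner k hk]), ← Finset.sum_add_distrib]
        refine Finset.sum_congr rfl fun k hk => ?_
        rw [Finset.mul_sum, Finset.mul_sum, ← Finset.sum_add_distrib]
        refine Finset.sum_congr rfl fun j hj => ?_
        ring
      -- RHS expansion
      rw [hL2, show n+1+1 = n+2 from rfl,
        pascal_sum n (fun m => Rv J ψ F m t * Rv J ψ G (n+1-m) t)]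
      simp only [Nat.succ_sub_succ]
      -- part 1 : Σ C(n,m) F_m G_{n-m+1} = T(RF, Rψ, YG)
      have part1 : ∑ m ∈ Finset.range (n+1), (n.choose m : ℂ) *
            (Rv J ψ F m t * Rv J ψ G (n+1-m) t)
          = ∑ m ∈ Finset.range (n+1), ∑ j ∈ Finset.range (n-m+1),
              (n.choose m : ℂ) * ((n-m).choose j : ℂ) *
                (Rv J ψ F m t * Rv J ψ ψ j t * Lam J ψ 0 (fun x => derivWithin G J x) (n-m-j) t) := by
        refine Finset.sum_congr rfl fun m hm => ?_
        have hm' : m ≤ n := Nat.lt_succ_iff.mp (Finset.mem_range.mp hm)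
        rw [Nat.succ_sub hm', show Rv J ψ G ((n-m)+1) = Lam J ψ 1 (fun x => derivWithin G J x) (n-m) from rfl,
          star hu hψ hψ0 (n-m) _ hdG t ht, Finset.mul_sum, Finset.mul_sum]
        refine Finset.sum_congr rfl fun j _ => ?_
        ring
      -- part 2 : Σ C(n,m) F_{m+1} G_{n-m} = T(RG, Rψ, XF) after reflection
      have part2 : ∑ m ∈ Finset.range (n+1), (n.choose m : ℂ) *
            (Rv J ψ F (m+1) t * Rv J ψ G (n-m) t)
          = ∑ m ∈ Finset.range (n+1), ∑ j ∈ Finset.range (n-m+1),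
              (n.choose m : ℂ) * ((n-m).choose j : ℂ) *
                (Rv J ψ G m t * Rv J ψ ψ j t * Lam J ψ 0 (fun x => derivWithin F J x) (n-m-j) t) := by
        have refl1 : ∑ m ∈ Finset.range (n+1), (n.choose m : ℂ) *
              (Rv J ψ F (m+1) t * Rv J ψ G (n-m) t)
            = ∑ m ∈ Finset.range (n+1), (n.choose m : ℂ) *
              (Rv J ψ G m t * Rv J ψ F ((n-m)+1) t) := by
          have hbc := binom_comm n (fun m => Rv J ψ F (m+1) t) (fun m => Rv J ψ G m t)
          simpa using hbc
        rw [refl1]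
        refine Finset.sum_congr rfl fun m hm => ?_
        rw [show Rv J ψ F ((n-m)+1) = Lam J ψ 1 (fun x => derivWithin F J x) (n-m) from rfl,
          star hu hψ hψ0 (n-m) _ hdF t ht, Finset.mul_sum, Finset.mul_sum]
        refine Finset.sum_congr rfl fun j _ => ?_
        ring
      rw [part1, part2]
      -- apply the two tri_swaps
      have c1 : ∑ k ∈ Finset.range (n+1), ∑ j ∈ Finset.range (n-k+1),
            (n.choose k : ℂ) * ((n-k).choose j : ℂ) *
              (Rv J ψ ψ k t * Lam J ψ 0 (fun x => derivWithin F J x) j t * Rv J ψ G (n-k-j) t)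
          = ∑ k ∈ Finset.range (n+1), ∑ j ∈ Finset.range (n-k+1),
            (n.choose k : ℂ) * ((n-k).choose j : ℂ) *
              (Rv J ψ G k t * Rv J ψ ψ j t * Lam J ψ 0 (fun x => derivWithin F J x) (n-k-j) t) := by
        have hc := (tri_swap n (fun k => Rv J ψ ψ k t)
            (fun j => Lam J ψ 0 (fun x => derivWithin F J x) j t) (fun i => Rv J ψ G i t)).trans
          ((tri_inner n (fun j => Lam J ψ 0 (fun x => derivWithin F J x) j t)
              (fun k => Rv J ψ ψ k t) (fun i => Rv J ψ G i t)).trans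
            ((tri_swap n (fun j => Lam J ψ 0 (fun x => derivWithin F J x) j t)
                (fun i => Rv J ψ G i t) (fun k => Rv J ψ ψ k t)).trans
              (tri_inner n (fun i => Rv J ψ G i t)
                (fun j => Lam J ψ 0 (fun x => derivWithin F J x) j t) (fun k => Rv J ψ ψ k t))))
        simpa using hc
      have c2 : ∑ k ∈ Finset.range (n+1), ∑ j ∈ Finset.range (n-k+1),
            (n.choose k : ℂ) * ((n-k).choose j : ℂ) *
              (Rv J ψ ψ k t * Rv J ψ F j t * Lam J ψ 0 (fun x => derivWithin G J x) (n-k-j) t)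
          = ∑ k ∈ Finset.range (n+1), ∑ j ∈ Finset.range (n-k+1),
            (n.choose k : ℂ) * ((n-k).choose j : ℂ) *
              (Rv J ψ F k t * Rv J ψ ψ j t * Lam J ψ 0 (fun x => derivWithin G J x) (n-k-j) t) := by
        have hc := tri_swap n (fun k => Rv J ψ ψ k t) (fun j => Rv J ψ F j t)
          (fun i => Lam J ψ 0 (fun x => derivWithin G J x) i t)
        simpa using hc
      rw [c1, c2]
      ring
end core3

/-- `F_m(ψ,q) = D^{m-1}(ψ^m · D(ψ^q))`, with `F_0(ψ,q) = ψ^q`.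
Derivatives are taken within `J`. -/
noncomputable def FS (J : Set ℝ) (ψ : ℝ → ℂ) : ℕ → ℤ → ℝ → ℂ
  | 0, q => fun t => ψ t ^ q
  | (m + 1), q => iteratedDerivWithin m (ψ ^ (m + 1) * derivWithin (fun t => ψ t ^ q) J) J

section assemble
variable {J : Set ℝ} {ψ : ℝ → ℂ}
variable (hu : UniqueDiffOn ℝ J) (hψ : ContDiffOn ℝ ∞ ψ J) (hψ0 : ∀ t ∈ J, ψ t ≠ 0)

include hu hψ hψ0 in
theorem dzpow (q : ℤ) {t : ℝ} (ht : t ∈ J) :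
    derivWithin (fun s => ψ s ^ q) J t = (q:ℂ) * ψ t ^ (q-1) * derivWithin ψ J t := by
  have h1 : HasDerivWithinAt ψ (derivWithin ψ J t) J t :=
    (hψ.differentiableOn (by simp) t ht).hasDerivWithinAt
  have h3 : HasDerivWithinAt (fun s => ψ s ^ q)
      ((q:ℂ) * ψ t ^ (q-1) * derivWithin ψ J t) J t := by
    have := (hasDerivWithinAt_zpow q (ψ t) (Or.inl (hψ0 t ht)) Set.univ).hasDerivAt (by simp)
    simpa [mul_comm, Function.comp_def] using this.comp_hasDerivWithinAt t h1
  exact h3.derivWithin (hu t ht)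

include hu hψ hψ0 in
theorem FS_integrand (q : ℤ) (m : ℕ) :
    Set.EqOn (ψ ^ (m+1) * derivWithin (fun s => ψ s ^ q) J)
      ((q:ℂ) • fun y => ψ y ^ ((m:ℤ) + q) * derivWithin ψ J y) J := by
  intro y hy
  simp only [Pi.mul_apply, Pi.pow_apply, Pi.smul_apply, smul_eq_mul]
  rw [dzpow hu hψ hψ0 q hy, show ((m:ℤ) + q) = ((m+1 : ℕ) : ℤ) + (q - 1) from by push_cast; ring,
    zpow_add₀ (hψ0 y hy), zpow_natCast]
  ring

include hu hψ hψ0 in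
theorem FS_eq_Rv (q : ℤ) (m : ℕ) {t : ℝ} (ht : t ∈ J) :
    FS J ψ m q t = Rv J ψ (fun x => ψ x ^ q) m t := by
  cases m with
  | zero => rfl
  | succ m =>
    show iteratedDerivWithin m (ψ ^ (m+1) * derivWithin (fun s => ψ s ^ q) J) J t
      = Lam J ψ 1 (fun x => derivWithin (fun s => ψ s ^ q) J x) m t
    refine iteratedDerivWithin_congr (fun x hx => ?_) ht
    simp only [Pi.mul_apply, Pi.pow_apply]
    rw [show ((m:ℤ)+1) = ((m+1 : ℕ) : ℤ) from by push_cast; ring, zpow_natCast]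

include hu hψ hψ0 in
theorem FS_lam (q : ℤ) (m : ℕ) :
    Set.EqOn (FS J ψ (m+1) q)
      ((q:ℂ) • Lam J ψ q (fun x => derivWithin ψ J x) m) J := by
  intro x hx
  have lek : (m : WithTop ℕ∞) ≤ ∞ := le_of_lt (by exact_mod_cast WithTop.coe_lt_top _)
  have hsm : ContDiffOn ℝ ∞ (fun y => ψ y ^ ((m:ℤ) + q) * derivWithin ψ J y) J :=
    smooth_int hψ hψ0 _ (hψ.derivWithin hu (by simp))
  show iteratedDerivWithin m (ψ ^ (m+1) * derivWithin (fun s => ψ s ^ q) J) J x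
    = ((q:ℂ) • Lam J ψ q (fun y => derivWithin ψ J y) m) x
  rw [iteratedDerivWithin_congr (FS_integrand hu hψ hψ0 q m) hx,
    iteratedDerivWithin_const_smul hx hu (q:ℂ) (hsm.of_le lek x hx)]
  rfl

include hu hψ hψ0 in
theorem conv_norm (q : ℤ) (m : ℕ) {t : ℝ} (ht : t ∈ J) :
    Rv J ψ (fun x => ψ x ^ q * ψ x ^ q) (m+1) t
      = (2*(q:ℂ)) * iteratedDerivWithin m
          (fun x => ψ x ^ ((m:ℤ) + 2*q) * derivWithin ψ J x) J t := by
  have lek : (m : WithTop ℕ∞) ≤ ∞ := le_of_lt (by exact_mod_cast WithTop.coe_lt_top _)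
  have hsm : ContDiffOn ℝ ∞ (fun y => ψ y ^ ((m:ℤ) + 2*q) * derivWithin ψ J y) J :=
    smooth_int hψ hψ0 _ (hψ.derivWithin hu (by simp))
  have hEq2 : Set.EqOn (fun y => ψ y ^ q * ψ y ^ q) (fun y => ψ y ^ (2*q)) J := by
    intro y hy
    simp only
    rw [show (2*q : ℤ) = q + q from by ring, zpow_add₀ (hψ0 y hy)]
  have hint : Set.EqOn (fun x => ψ x ^ ((m:ℤ)+1) *
        derivWithin (fun y => ψ y ^ q * ψ y ^ q) J x)
      ((2*(q:ℂ)) • fun x => ψ x ^ ((m:ℤ) + 2*q) * derivWithin ψ J x) J := by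
    intro x hx
    simp only [Pi.smul_apply, smul_eq_mul]
    rw [derivWithin_congr hEq2 (hEq2 hx), dzpow hu hψ hψ0 (2*q) hx,
      show ((m:ℤ) + 2*q) = ((m:ℤ) + 1) + (2*q - 1) from by ring,
      zpow_add₀ (hψ0 x hx) ((m:ℤ) + 1) (2*q - 1)]
    push_cast
    ring
  show Lam J ψ 1 (fun x => derivWithin (fun y => ψ y ^ q * ψ y ^ q) J x) m t = _
  rw [Lam, iteratedDerivWithin_congr hint ht,
    iteratedDerivWithin_const_smul ht hu ((2*(q:ℂ))) (hsm.of_le lek t ht)]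
  rfl
end assemble

theorem stmt13 (a b : ℝ) (hab : a < b) (J : Set ℝ) (hJ : J = Set.Icc a b)
    (ψ : ℝ → ℂ) (hψ : ContDiffOn ℝ (⊤ : ℕ∞) ψ J) (hψ0 : ∀ t ∈ J, ψ t ≠ 0)
    (n p : ℕ) (hp1 : 1 ≤ p) (hpn : p ≤ n) :
    ∀ t ∈ J,
      2 * iteratedDerivWithin p (FS J ψ (n - p) (-(p : ℤ))) J t =
        ∑ k ∈ Finset.range (n + 1), (n.choose k : ℂ) *
          FS J ψ k (-(p : ℤ)) t * FS J ψ (n - k) (-(p : ℤ)) t := by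
  have hud : UniqueDiffOn ℝ J := hJ ▸ uniqueDiffOn_Icc hab
  have hψ' : ContDiffOn ℝ ∞ ψ J := hψ.of_le (by simp)
  intro t ht
  set q : ℤ := -(p:ℤ) with hq
  have hsq : ContDiffOn ℝ ∞ (fun x => ψ x ^ q) J := smooth_zp hψ' hψ0 q
  -- RHS
  have hc := mulF hud hψ' hψ0 n (fun x => ψ x ^ q) (fun x => ψ x ^ q) hsq hsq t ht
  have hconv : ∑ k ∈ Finset.range (n + 1), (n.choose k : ℂ) *
        FS J ψ k q t * FS J ψ (n - k) q t
      = Rv J ψ (fun x => ψ x ^ q * ψ x ^ q) n t := by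
    rw [hc]
    refine Finset.sum_congr rfl fun k _ => ?_
    rw [FS_eq_Rv hud hψ' hψ0 q k ht, FS_eq_Rv hud hψ' hψ0 q (n-k) ht]
    ring
  obtain ⟨n', rfl⟩ : ∃ n', n = n' + 1 := ⟨n - 1, by omega⟩
  have hnorm := conv_norm hud hψ' hψ0 q n' ht
  rw [hconv, hnorm]
  -- LHS
  rcases eq_or_lt_of_le hpn with hEq | hlt
  · -- p = n
    obtain ⟨p', rfl⟩ : ∃ p', p = p' + 1 := ⟨p - 1, by omega⟩
    have hp'n : p' = n' := by omega
    subst hp'n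
    rw [show p' + 1 - (p' + 1) = 0 from by omega]
    have hstep : iteratedDerivWithin (p'+1) (FS J ψ 0 q) J t
        = (q:ℂ) * iteratedDerivWithin p'
            (fun x => ψ x ^ (q-1) * derivWithin ψ J x) J t := by
      rw [show FS J ψ 0 q = fun s => ψ s ^ q from rfl,
        iteratedDerivWithin_succ']
      have hint : Set.EqOn (derivWithin (fun s => ψ s ^ q) J)
          ((q:ℂ) • fun x => ψ x ^ (q-1) * derivWithin ψ J x) J := by
        intro x hx
        simp only [Pi.smul_apply, smul_eq_mul]
        rw [dzpow hud hψ' hψ0 q hx]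
        ring
      have lek : (p' : WithTop ℕ∞) ≤ ∞ := le_of_lt (by exact_mod_cast WithTop.coe_lt_top _)
      have hsm : ContDiffOn ℝ ∞ (fun x => ψ x ^ (q-1) * derivWithin ψ J x) J :=
        smooth_int hψ' hψ0 _ (hψ'.derivWithin hud (by simp))
      rw [iteratedDerivWithin_congr hint ht,
        iteratedDerivWithin_const_smul ht hud ((q:ℂ)) (hsm.of_le lek t ht), smul_eq_mul]
    rw [hstep, lam_exp_congr (ψ := ψ) (w := derivWithin ψ J)
      (show (q - 1 : ℤ) = (p':ℤ) + 2*q from by omega)]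
    ring
  · -- p < n
    set m := n' + 1 - p - 1 with hm
    rw [show n' + 1 - p = m + 1 from by omega]
    have hFSl := FS_lam hud hψ' hψ0 q m
    have lek : (p : WithTop ℕ∞) ≤ ∞ := le_of_lt (by exact_mod_cast WithTop.coe_lt_top _)
    have hsmL : ContDiffOn ℝ ∞ (Lam J ψ q (fun x => derivWithin ψ J x) m) J :=
      iterated_smooth hud (smooth_int hψ' hψ0 _ (hψ'.derivWithin hud (by simp))) m
    have hstep : iteratedDerivWithin p (FS J ψ (m+1) q) J t
        = (q:ℂ) * iteratedDerivWithin (p+m)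
            (fun x => ψ x ^ ((m:ℤ) + q) * derivWithin ψ J x) J t := by
      rw [iteratedDerivWithin_congr hFSl ht,
        iteratedDerivWithin_const_smul ht hud ((q:ℂ)) (hsmL.of_le lek t ht), smul_eq_mul]
      rw [show Lam J ψ q (fun x => derivWithin ψ J x) m
          = iteratedDerivWithin m (fun x => ψ x ^ ((m:ℤ) + q) * derivWithin ψ J x) J from rfl,
        iter_comp hud p m _ ht]
    rw [hstep, show p + m = n' from by omega, lam_exp_congr (ψ := ψ) (w := derivWithin ψ J)
      (show ((m:ℕ):ℤ) + q = (n':ℤ) + 2*q from by omega)]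
    ring
end
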